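/- arXiv:1901.07603 — 6 statements merged into one kernel-verified Lean document; each statement's English description precedes it below -/
import Mathlib

section
/- Let d₁, d₂ be positive integers with d₁ ∣ d₂ and d₂ even, and set n := d₁·d₂. Let G be an isotropic subgroup of M = (ZMod n)⁴ (with respect to the standard symplectic form ω) such that G has cardinality n and the quotient G^⊥/G is isomorphic (as an abelian group) to ZMod d₁ × ZMod d₁ × ZMod d₂ × ZMod d₂. If at least three pairwise distinct elements among the six Weierstrass 2-torsion elements e₁, f₁, e₁+f₁, e₂, f₂, e₂+f₂ lie in the same coset of G (i.e. their pairwise differences lie in G), then d₂ ≡ 0 (mod 4). -/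
/-- The group `A[n]` of `n`-torsion points of a principally polarized abelian surface,
modelled as `(ZMod n)⁴`, with coordinates ordered `(e₁', e₂', f₁', f₂')`. -/
abbrev M (n : ℕ) : Type := ZMod n × ZMod n × ZMod n × ZMod n

/-- The standard generator `e₁'`. -/
def e₁' (n : ℕ) : M n := (1, 0, 0, 0)
/-- The standard generator `e₂'`. -/
def e₂' (n : ℕ) : M n := (0, 1, 0, 0)
/-- The standard generator `f₁'`. -/
def f₁' (n : ℕ) : M n := (0, 0, 1, 0)
/-- The standard generator `f₂'`. -/
def f₂' (n : ℕ) : M n := (0, 0, 0, 1)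

/-- The standard symplectic form on `(ZMod n)⁴`: the biadditive alternating form with
`ω(e₁',f₁') = ω(e₂',f₂') = 1` and vanishing on the other pairs of standard generators. -/
def sympForm (n : ℕ) (x y : M n) : ZMod n :=
  x.1 * y.2.2.1 + x.2.1 * y.2.2.2 - x.2.2.1 * y.1 - x.2.2.2 * y.2.1

/-- A subgroup `G` is isotropic if the symplectic form vanishes identically on `G × G`. -/
def IsIsotropic (n : ℕ) (G : AddSubgroup (M n)) : Prop :=
  ∀ g ∈ G, ∀ h ∈ G, sympForm n g h = 0

lemma sympForm_add_left (n : ℕ) (a b g : M n) :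
    sympForm n (a + b) g = sympForm n a g + sympForm n b g := by
  simp only [sympForm, Prod.fst_add, Prod.snd_add]; ring

lemma sympForm_neg_left (n : ℕ) (a g : M n) :
    sympForm n (-a) g = -sympForm n a g := by
  simp only [sympForm, Prod.fst_neg, Prod.snd_neg]; ring

/-- The orthogonal complement `G^⊥` of a subgroup `G` with respect to the symplectic form. -/
def perp (n : ℕ) (G : AddSubgroup (M n)) : AddSubgroup (M n) where
  carrier := {x | ∀ g ∈ G, sympForm n x g = 0}
  zero_mem' := by intro g _; simp [sympForm]
  add_mem' := by
    intro a b ha hb g hg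
    rw [sympForm_add_left, ha g hg, hb g hg, add_zero]
  neg_mem' := by
    intro a ha g hg
    rw [sympForm_neg_left, ha g hg, neg_zero]

/-- The six Weierstrass 2-torsion elements `e₁, f₁, e₁+f₁, e₂, f₂, e₂+f₂`,
where `e₁ = (n/2)·e₁'`, etc. -/
def weierstrassSet (n : ℕ) : Set (M n) :=
  {(n / 2) • e₁' n, (n / 2) • f₁' n, (n / 2) • e₁' n + (n / 2) • f₁' n,
   (n / 2) • e₂' n, (n / 2) • f₂' n, (n / 2) • e₂' n + (n / 2) • f₂' n}

/-! ### Auxiliary machinery -/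

/-- The group `(𝔽₂)⁴` of bit-patterns. -/
abbrev V2 : Type := ZMod 2 × ZMod 2 × ZMod 2 × ZMod 2

/-- The standard symplectic form over `𝔽₂` (signs are irrelevant in characteristic 2). -/
def om2 (a b : V2) : ZMod 2 :=
  a.1 * b.2.2.1 + a.2.1 * b.2.2.2 + a.2.2.1 * b.1 + a.2.2.2 * b.2.1

/-- The patterns of the six Weierstrass elements. -/
def inWS (p : V2) : Prop :=
  p = (1,0,0,0) ∨ p = (0,0,1,0) ∨ p = (1,0,1,0) ∨ p = (0,1,0,0) ∨ p = (0,0,0,1) ∨ p = (0,1,0,1)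

instance : DecidablePred inWS := fun p => by unfold inWS; infer_instance

def kap (n : ℕ) (t : ZMod 2) : ZMod n := (t.val : ZMod n)

/-- Scaling a bit-pattern by `r : ZMod n`. -/
def lft (n : ℕ) (r : ZMod n) (p : V2) : M n :=
  (r * kap n p.1, r * kap n p.2.1, r * kap n p.2.2.1, r * kap n p.2.2.2)

lemma bit2 (x : ZMod 2) : x = 0 ∨ x = 1 := by revert x; decide

lemma V2_add_self (p : V2) : p + p = 0 := by revert p; decide

lemma V2_eq_of_add_eq_zero {p q : V2} (h : p + q = 0) : p = q := by revert p q h; decide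

lemma kap_zero (n : ℕ) : kap n 0 = 0 := by
  have : (0 : ZMod 2).val = 0 := by decide
  simp [kap, this]

lemma kap_one (n : ℕ) : kap n 1 = 1 := by
  have : (1 : ZMod 2).val = 1 := by decide
  simp [kap, this]

lemma kap_mul (n : ℕ) (x y : ZMod 2) : kap n (x * y) = kap n x * kap n y := by
  rcases bit2 x with rfl | rfl <;> rcases bit2 y with rfl | rfl <;>
    simp [kap_zero, kap_one]

lemma kap_add (n : ℕ) (r : ZMod n) (hr : r + r = 0) (x y : ZMod 2) :
    r * kap n (x + y) = r * kap n x + r * kap n y := by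
  rcases bit2 x with rfl | rfl <;> rcases bit2 y with rfl | rfl <;>
    simp [kap_zero, kap_one, show (1 + 1 : ZMod 2) = 0 by decide, hr]

lemma lft_zero (n : ℕ) (r : ZMod n) : lft n r 0 = 0 := by
  simp [lft, kap_zero, Prod.ext_iff]

lemma lft_add (n : ℕ) (r : ZMod n) (hr : r + r = 0) (p q : V2) :
    lft n r (p + q) = lft n r p + lft n r q := by
  simp only [lft, Prod.fst_add, Prod.snd_add, Prod.mk_add_mk, Prod.mk.injEq]
  exact ⟨kap_add n r hr _ _, kap_add n r hr _ _, kap_add n r hr _ _, kap_add n r hr _ _⟩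

lemma lft_inj (n : ℕ) (r : ZMod n) (hr : r ≠ 0) (p q : V2)
    (h : lft n r p = lft n r q) : p = q := by
  have key : ∀ x y : ZMod 2, r * kap n x = r * kap n y → x = y := by
    intro x y hxy
    rcases bit2 x with rfl | rfl <;> rcases bit2 y with rfl | rfl
    · rfl
    · exact absurd (by simpa [kap_zero, kap_one] using hxy.symm) hr
    · exact absurd (by simpa [kap_zero, kap_one] using hxy) hr
    · rfl
  obtain ⟨p1, p2, p3, p4⟩ := p
  obtain ⟨q1, q2, q3, q4⟩ := q
  simp only [lft, Prod.mk.injEq] at h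
  obtain ⟨h1, h2, h3, h4⟩ := h
  simp only [Prod.mk.injEq]
  exact ⟨key _ _ h1, key _ _ h2, key _ _ h3, key _ _ h4⟩

lemma lft_sub (n : ℕ) (r : ZMod n) (hr : r + r = 0) (p q : V2) :
    lft n r p - lft n r q = lft n r (p + q) := by
  have hq : lft n r q + lft n r q = 0 := by
    rw [← lft_add n r hr, V2_add_self q, lft_zero]
  rw [lft_add n r hr, sub_eq_add_neg]
  congr 1
  exact neg_eq_of_add_eq_zero_left hq

lemma sympForm_lft (n : ℕ) (r₁ r₂ : ZMod n) (h : r₁ * r₂ + r₁ * r₂ = 0) (p q : V2) :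
    sympForm n (lft n r₁ p) (lft n r₂ q) = (r₁ * r₂) * kap n (om2 p q) := by
  have e1 : sympForm n (lft n r₁ p) (lft n r₂ q)
      = (r₁*r₂) * (kap n p.1 * kap n q.2.2.1) + (r₁*r₂) * (kap n p.2.1 * kap n q.2.2.2)
        + (r₁*r₂) * (kap n p.2.2.1 * kap n q.1) + (r₁*r₂) * (kap n p.2.2.2 * kap n q.2.1) := by
    simp only [sympForm, lft]
    linear_combination (-(kap n p.2.2.1 * kap n q.1) - kap n p.2.2.2 * kap n q.2.1) * h
  rw [e1, ← kap_mul, ← kap_mul, ← kap_mul, ← kap_mul,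
    ← kap_add n _ h, ← kap_add n _ h, ← kap_add n _ h]
  rfl

lemma sympForm_zero_left (n : ℕ) (g : M n) : sympForm n 0 g = 0 := by
  simp [sympForm]

lemma sympForm_zero_right (n : ℕ) (x : M n) : sympForm n x 0 = 0 := by
  simp [sympForm]

lemma sympForm_add_right (n : ℕ) (x a b : M n) :
    sympForm n x (a + b) = sympForm n x a + sympForm n x b := by
  simp only [sympForm, Prod.fst_add, Prod.snd_add]; ring

lemma sympForm_nsmul_right (n : ℕ) (k : ℕ) (x y : M n) :
    sympForm n x (k • y) = k • sympForm n x y := by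
  induction k with
  | zero => simp [sympForm]
  | succ k ih => rw [succ_nsmul, succ_nsmul, sympForm_add_right, ih]

lemma nsmul_four {A : Type*} [AddMonoid A] (a : A) : (4 : ℕ) • a = a + a + a + a := by
  rw [show (4:ℕ) = 1+1+1+1 by norm_num, add_nsmul, add_nsmul, add_nsmul, one_nsmul]

lemma eq_zero_of_coprime_nsmul {A : Type*} [AddGroup A] {a b : ℕ} (h : Nat.Coprime a b)
    {x : A} (ha : a • x = 0) (hb : b • x = 0) : x = 0 := by
  have h1 := addOrderOf_dvd_of_nsmul_eq_zero ha
  have h2 := addOrderOf_dvd_of_nsmul_eq_zero hb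
  have h3 : addOrderOf x ∣ 1 := by
    rw [← Nat.Coprime.gcd_eq_one h]; exact Nat.dvd_gcd h1 h2
  exact AddMonoid.addOrderOf_eq_one_iff.mp (Nat.dvd_one.mp h3)

lemma Mn_card_nsmul (n : ℕ) (w : M n) : n • w = 0 := by
  rw [nsmul_eq_mul]
  have h0 : ((n:ℕ) : M n) = 0 := by
    simp [Prod.ext_iff, ZMod.natCast_self]
  rw [h0, zero_mul]

def torHom (n : ℕ) (k : ℕ) (g : M n) (hg : (k : ℤ) • g = 0) : ZMod k →+ M n :=
  ZMod.lift k ⟨zmultiplesHom (M n) g, hg⟩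

lemma torHom_int (n k : ℕ) (g : M n) (hg : (k : ℤ) • g = 0) (j : ℤ) :
    torHom n k g hg ((j : ℤ) : ZMod k) = j • g := by
  simp [torHom]

lemma bit4 (x : ZMod 4) : x = 0 ∨ x = 1 ∨ x = 2 ∨ x = 3 := by revert x; decide

lemma eight_dvd_card (n : ℕ) (G : AddSubgroup (M n)) (g h w : M n)
    (hg : g ∈ G) (hh : h ∈ G) (hw : w ∈ G)
    (hg2 : g + g = 0) (hh2 : h + h = 0) (hw2 : w + w = 0)
    (hg0 : g ≠ 0) (hh0 : h ≠ 0) (hgh : g ≠ h)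
    (hw0 : w ≠ 0) (hwg : w ≠ g) (hwh : w ≠ h) (hwgh : w ≠ g + h) :
    (8 : ℕ) ∣ Nat.card G := by
  have hgz : ((2:ℕ) : ℤ) • g = 0 := by
    rw [show (((2:ℕ)):ℤ) = (2:ℤ) by norm_num, two_zsmul]; exact hg2
  have hhz : ((2:ℕ) : ℤ) • h = 0 := by
    rw [show (((2:ℕ)):ℤ) = (2:ℤ) by norm_num, two_zsmul]; exact hh2
  have hwz : ((2:ℕ) : ℤ) • w = 0 := by
    rw [show (((2:ℕ)):ℤ) = (2:ℤ) by norm_num, two_zsmul]; exact hw2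
  set f1 : ZMod 2 →+ M n := torHom n 2 g hgz with hf1
  set f2 : ZMod 2 →+ M n := torHom n 2 h hhz with hf2
  set f3 : ZMod 2 →+ M n := torHom n 2 w hwz with hf3
  have e11 : f1 1 = g := by
    rw [hf1, show (1 : ZMod 2) = ((1:ℤ) : ZMod 2) by norm_num, torHom_int, one_zsmul]
  have e21 : f2 1 = h := by
    rw [hf2, show (1 : ZMod 2) = ((1:ℤ) : ZMod 2) by norm_num, torHom_int, one_zsmul]
  have e31 : f3 1 = w := by
    rw [hf3, show (1 : ZMod 2) = ((1:ℤ) : ZMod 2) by norm_num, torHom_int, one_zsmul]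
  set φ : ZMod 2 × ZMod 2 × ZMod 2 →+ M n := f1.coprod (f2.coprod f3) with hφ
  have hgh2 : (g + h) + (g + h) = 0 := by
    calc (g + h) + (g + h) = (g + g) + (h + h) := by abel
    _ = 0 := by rw [hg2, hh2, add_zero]
  have hinj : Function.Injective φ := by
    rw [injective_iff_map_eq_zero]
    rintro ⟨x, y, z⟩ hp
    rw [hφ, AddMonoidHom.coprod_apply, AddMonoidHom.coprod_apply] at hp
    rcases bit2 x with rfl | rfl <;> rcases bit2 y with rfl | rfl <;>
        rcases bit2 z with rfl | rfl <;>
      simp only [e11, e21, e31, map_zero, zero_add, add_zero] at hp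
    · rfl
    · exact absurd hp hw0
    · exact absurd hp hh0
    · exact absurd (add_left_cancel (hp.trans hh2.symm)) hwh
    · exact absurd hp hg0
    · exact absurd (add_left_cancel (hp.trans hg2.symm)) hwg
    · exact absurd (add_left_cancel (hp.trans hg2.symm)).symm hgh
    · rw [← add_assoc] at hp
      exact absurd (add_left_cancel (hp.trans hgh2.symm)) hwgh
  have hrange : φ.range ≤ G := by
    rintro v ⟨⟨x, y, z⟩, rfl⟩
    rw [hφ, AddMonoidHom.coprod_apply, AddMonoidHom.coprod_apply]
    refine AddSubgroup.add_mem G ?_ (AddSubgroup.add_mem G ?_ ?_)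
    · rcases bit2 x with rfl | rfl
      · rw [map_zero]; exact AddSubgroup.zero_mem G
      · rw [e11]; exact hg
    · rcases bit2 y with rfl | rfl
      · rw [map_zero]; exact AddSubgroup.zero_mem G
      · rw [e21]; exact hh
    · rcases bit2 z with rfl | rfl
      · rw [map_zero]; exact AddSubgroup.zero_mem G
      · rw [e31]; exact hw
  have hc8 : Nat.card φ.range = 8 := by
    have h1 : Nat.card (ZMod 2 × ZMod 2 × ZMod 2) = 8 := by
      simp [Nat.card_prod, Nat.card_zmod]
    rw [← h1]
    exact Nat.card_congr (AddMonoidHom.ofInjective hinj).toEquiv.symm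
  exact hc8 ▸ AddSubgroup.card_dvd_of_le hrange

lemma eight_dvd_card' (n : ℕ) (G : AddSubgroup (M n)) (u l : M n)
    (hu : u ∈ G) (hl : l ∈ G)
    (hu4 : u + u + u + u = 0) (hl2 : l + l = 0)
    (hu0 : u ≠ 0) (hl0 : l ≠ 0) (hul : u ≠ l)
    (hk0 : u + u ≠ 0) (hkl : u + u ≠ l) :
    (8 : ℕ) ∣ Nat.card G := by
  have huz : ((4:ℕ) : ℤ) • u = 0 := by
    rw [show (((4:ℕ)):ℤ) = (1+1+1+1:ℤ) by norm_num, add_zsmul, add_zsmul, add_zsmul, one_zsmul]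
    exact hu4
  have hlz : ((2:ℕ) : ℤ) • l = 0 := by
    rw [show (((2:ℕ)):ℤ) = (2:ℤ) by norm_num, two_zsmul]; exact hl2
  set f1 : ZMod 4 →+ M n := torHom n 4 u huz with hf1
  set f2 : ZMod 2 →+ M n := torHom n 2 l hlz with hf2
  have e11 : f1 1 = u := by
    rw [hf1, show (1 : ZMod 4) = ((1:ℤ) : ZMod 4) by norm_num, torHom_int, one_zsmul]
  have e12 : f1 2 = u + u := by
    rw [hf1, show (2 : ZMod 4) = ((2:ℤ) : ZMod 4) by norm_num, torHom_int, two_zsmul]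
  have e13 : f1 3 = u + u + u := by
    rw [hf1, show (3 : ZMod 4) = ((1+1+1:ℤ) : ZMod 4) by norm_num, torHom_int,
      add_zsmul, add_zsmul, one_zsmul]
  have e21 : f2 1 = l := by
    rw [hf2, show (1 : ZMod 2) = ((1:ℤ) : ZMod 2) by norm_num, torHom_int, one_zsmul]
  set φ : ZMod 4 × ZMod 2 →+ M n := f1.coprod f2 with hφ
  have hinj : Function.Injective φ := by
    rw [injective_iff_map_eq_zero]
    rintro ⟨x, y⟩ hp
    rw [hφ, AddMonoidHom.coprod_apply] at hp
    rcases bit4 x with rfl | rfl | rfl | rfl <;> rcases bit2 y with rfl | rfl <;>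
      simp only [e11, e12, e13, e21, map_zero, zero_add, add_zero] at hp
    · rfl
    · exact absurd hp hl0
    · exact absurd hp hu0
    · exact absurd (add_right_cancel (hp.trans hl2.symm)) hul
    · exact absurd hp hk0
    · exact absurd (add_right_cancel (hp.trans hl2.symm)) hkl
    · rw [hp, zero_add] at hu4
      exact absurd hu4 hu0
    · exact absurd (add_left_cancel (hp.trans hu4.symm)).symm hul
  have hrange : φ.range ≤ G := by
    rintro v ⟨⟨x, y⟩, rfl⟩
    rw [hφ, AddMonoidHom.coprod_apply]
    refine AddSubgroup.add_mem G ?_ ?_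
    · rcases bit4 x with rfl | rfl | rfl | rfl
      · rw [map_zero]; exact AddSubgroup.zero_mem G
      · rw [e11]; exact hu
      · rw [e12]; exact AddSubgroup.add_mem G hu hu
      · rw [e13]; exact AddSubgroup.add_mem G (AddSubgroup.add_mem G hu hu) hu
    · rcases bit2 y with rfl | rfl
      · rw [map_zero]; exact AddSubgroup.zero_mem G
      · rw [e21]; exact hl
  have hc8 : Nat.card φ.range = 8 := by
    have h1 : Nat.card (ZMod 4 × ZMod 2) = 8 := by
      simp [Nat.card_prod, Nat.card_zmod]
    rw [← h1]
    exact Nat.card_congr (AddMonoidHom.ofInjective hinj).toEquiv.symm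
  exact hc8 ▸ AddSubgroup.card_dvd_of_le hrange

lemma bstruct (n s : ℕ) (hn : n = 4 * s) (hs : s % 2 = 1)
    (G : AddSubgroup (M n)) (hcard : Nat.card G = n)
    (g h : M n) (hgG : g ∈ G) (hhG : h ∈ G)
    (hg2 : g + g = 0) (hh2 : h + h = 0)
    (hg0 : g ≠ 0) (hh0 : h ≠ 0) (hgh : g ≠ h)
    (u : M n) (huG : u ∈ G) (hu4 : u + u + u + u = 0) :
    u = 0 ∨ u = g ∨ u = h ∨ u = g + h := by
  by_contra hcon
  push_neg at hcon
  obtain ⟨hu0, hug, huh, hugh⟩ := hcon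
  have h8 : (8:ℕ) ∣ Nat.card G := by
    by_cases hk0 : u + u = 0
    · exact eight_dvd_card n G g h u hgG hhG huG hg2 hh2 hk0 hg0 hh0 hgh hu0 hug huh hugh
    · by_cases hkg : u + u = g
      · exact eight_dvd_card' n G u h huG hhG hu4 hh2 hu0 hh0 huh hk0 (by rw [hkg]; exact hgh)
      · by_cases hkh : u + u = h
        · exact eight_dvd_card' n G u g huG hgG hu4 hg2 hu0 hg0 hug hk0
            (by rw [hkh]; exact fun hh' => hgh hh'.symm)
        · by_cases hkgh : u + u = g + h
          · refine eight_dvd_card' n G u g huG hgG hu4 hg2 hu0 hg0 hug hk0 ?_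
            rw [hkgh]
            intro he
            exact hh0 (add_left_cancel (he.trans (add_zero g).symm))
          · have hkG : u + u ∈ G := AddSubgroup.add_mem G huG huG
            have hk2 : (u+u) + (u+u) = 0 := by
              calc (u+u)+(u+u) = u+u+u+u := by abel
              _ = 0 := hu4
            exact eight_dvd_card n G g h (u+u) hgG hhG hkG hg2 hh2 hk2 hg0 hh0 hgh hk0 hkg hkh hkgh
  rw [hcard, hn] at h8
  omega

set_option synthInstance.maxSize 2000 in
set_option synthInstance.maxHeartbeats 1000000 in
set_option maxHeartbeats 2000000 in
lemma D1 : ∀ p q r : V2, inWS p → inWS q → inWS r → p ≠ q → p ≠ r → q ≠ r →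
    om2 (p + q) (p + r) = 1 := by decide

set_option synthInstance.maxSize 2000 in
set_option synthInstance.maxHeartbeats 1000000 in
set_option maxHeartbeats 2000000 in
lemma D2 : ∀ a b : V2, om2 a b = 1 → ∃ c : V2, om2 c a = 0 ∧ om2 c b = 0 ∧
    c ≠ 0 ∧ c ≠ a ∧ c ≠ b ∧ c ≠ a + b := by decide

lemma D3 (c a b : V2) : om2 c (a + b) = om2 c a + om2 c b := by
  simp only [om2, Prod.fst_add, Prod.snd_add]; ring

lemma zmod_two_step (d : ℕ) (hd : d % 4 = 2) (t : ZMod d) (h : t + t + t + t = 0) :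
    t + t = 0 := by
  have h2 : (2:ℕ) • (t + t) = 0 := by
    rw [two_nsmul, ← add_assoc]; exact h
  have hu : (d/2 : ℕ) • (t + t) = 0 := by
    have hh : (d/2:ℕ) • (t+t) = (d:ℕ) • t := by
      rw [smul_add, ← add_nsmul]
      congr 1
      omega
    rw [hh, nsmul_eq_mul, ZMod.natCast_self, zero_mul]
  have hcop : Nat.Coprime 2 (d/2) := (Nat.prime_two.coprime_iff_not_dvd).mpr (by omega)
  exact eq_zero_of_coprime_nsmul hcop h2 hu

lemma target_two_step (d₁ d₂ : ℕ) (h1 : d₁ % 4 = 2) (h2 : d₂ % 4 = 2)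
    (t : ZMod d₁ × ZMod d₁ × ZMod d₂ × ZMod d₂) (h : t + t + t + t = 0) : t + t = 0 := by
  obtain ⟨t1, t2, t3, t4⟩ := t
  simp only [Prod.mk_add_mk, Prod.mk_eq_zero] at h ⊢
  obtain ⟨e1, e2, e3, e4⟩ := h
  exact ⟨zmod_two_step d₁ h1 t1 e1, zmod_two_step d₁ h1 t2 e2,
    zmod_two_step d₂ h2 t3 e3, zmod_two_step d₂ h2 t4 e4⟩

lemma ws_iff (n : ℕ) (x : M n) (hx : x ∈ weierstrassSet n) :
    ∃ p : V2, inWS p ∧ x = lft n ((n / 2 : ℕ) : ZMod n) p := by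
  have k0 : kap n 0 = 0 := kap_zero n
  have k1 : kap n 1 = 1 := kap_one n
  simp only [weierstrassSet, Set.mem_insert_iff, Set.mem_singleton_iff] at hx
  rcases hx with rfl | rfl | rfl | rfl | rfl | rfl
  · exact ⟨(1,0,0,0), Or.inl rfl,
      by simp [e₁', lft, k0, k1, Prod.ext_iff, nsmul_eq_mul, Prod.fst_natCast, Prod.snd_natCast]⟩
  · exact ⟨(0,0,1,0), Or.inr (Or.inl rfl),
      by simp [f₁', lft, k0, k1, Prod.ext_iff, nsmul_eq_mul, Prod.fst_natCast, Prod.snd_natCast]⟩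
  · exact ⟨(1,0,1,0), Or.inr (Or.inr (Or.inl rfl)),
      by simp [e₁', f₁', lft, k0, k1, Prod.ext_iff, nsmul_eq_mul, Prod.fst_natCast, Prod.snd_natCast]⟩
  · exact ⟨(0,1,0,0), Or.inr (Or.inr (Or.inr (Or.inl rfl))),
      by simp [e₂', lft, k0, k1, Prod.ext_iff, nsmul_eq_mul, Prod.fst_natCast, Prod.snd_natCast]⟩
  · exact ⟨(0,0,0,1), Or.inr (Or.inr (Or.inr (Or.inr (Or.inl rfl)))),
      by simp [f₂', lft, k0, k1, Prod.ext_iff, nsmul_eq_mul, Prod.fst_natCast, Prod.snd_natCast]⟩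
  · exact ⟨(0,1,0,1), Or.inr (Or.inr (Or.inr (Or.inr (Or.inr rfl)))),
      by simp [e₂', f₂', lft, k0, k1, Prod.ext_iff, nsmul_eq_mul, Prod.fst_natCast, Prod.snd_natCast]⟩

lemma stmt0_aux (d₁ d₂ n : ℕ) (hd₁ : 0 < d₁) (hd₂ : 0 < d₂) (hdvd : d₁ ∣ d₂) (heven : 2 ∣ d₂)
    (hn : n = d₁ * d₂)
    (G : AddSubgroup (M n))
    (hiso : IsIsotropic n G)
    (hcard : Nat.card G = n)
    (hquot : Nonempty
      ((perp n G ⧸ G.addSubgroupOf (perp n G)) ≃+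
        (ZMod d₁ × ZMod d₁ × ZMod d₂ × ZMod d₂)))
    (x y z : M n)
    (hx : x ∈ weierstrassSet n)
    (hy : y ∈ weierstrassSet n)
    (hz : z ∈ weierstrassSet n)
    (hxy : x ≠ y) (hxz : x ≠ z) (hyz : y ≠ z)
    (hGxy : x - y ∈ G) (hGxz : x - z ∈ G) (hGyz : y - z ∈ G) :
    d₂ % 4 = 0 := by
  by_contra hcon4
  have hd24 : d₂ % 4 = 2 := by omega
  have hnpos : 0 < n := by rw [hn]; exact Nat.mul_pos hd₁ hd₂
  have hn2 : 2 ∣ n := by rw [hn]; exact Dvd.dvd.mul_left heven d₁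
  haveI : NeZero n := ⟨by omega⟩
  -- patterns of the three Weierstrass points
  obtain ⟨px, hpxW, hxe⟩ := ws_iff n x hx
  obtain ⟨py, hpyW, hye⟩ := ws_iff n y hy
  obtain ⟨pz, hpzW, hze⟩ := ws_iff n z hz
  subst hxe hye hze
  set m' : ZMod n := ((n / 2 : ℕ) : ZMod n) with hm'
  have hm2 : m' + m' = 0 := by
    rw [hm', ← Nat.cast_add, show n / 2 + n / 2 = n by omega, ZMod.natCast_self]
  have hm0 : m' ≠ 0 := by
    rw [hm', Ne, ZMod.natCast_eq_zero_iff]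
    intro hdvd2
    have := Nat.le_of_dvd (by omega) hdvd2
    omega
  have hpq : px ≠ py := fun hh => hxy (by rw [hh])
  have hpr : px ≠ pz := fun hh => hxz (by rw [hh])
  have hqr : py ≠ pz := fun hh => hyz (by rw [hh])
  set α := px + py with hα
  set β := px + pz with hβ
  have hom1 : om2 α β = 1 := D1 px py pz hpxW hpyW hpzW hpq hpr hqr
  have hGa : lft n m' α ∈ G := by
    rw [hα, ← lft_sub n m' hm2]; exact hGxy
  have hGb : lft n m' β ∈ G := by
    rw [hβ, ← lft_sub n m' hm2]; exact hGxz
  have hα0 : α ≠ 0 := fun h0 => hpq (V2_eq_of_add_eq_zero h0)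
  have hβ0 : β ≠ 0 := fun h0 => hpr (V2_eq_of_add_eq_zero h0)
  have hαβ : α ≠ β := fun he => hqr (add_left_cancel (hα ▸ hβ ▸ he))
  by_cases hd1odd : d₁ % 2 = 1
  · -- Case A : n ≡ 2 (mod 4); isotropy is directly violated
    obtain ⟨b, hbdef⟩ := heven
    have hbodd : b % 2 = 1 := by omega
    have hn2b : n = 2 * (d₁ * b) := by rw [hn, hbdef]; ring
    have hhalf : n / 2 = d₁ * b := by omega
    have hodd : (n / 2) % 2 = 1 := by
      rw [hhalf, Nat.mul_mod, hd1odd, hbodd]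
    obtain ⟨r, hr⟩ : ∃ r, n / 2 = 2 * r + 1 := ⟨(n/2)/2, by omega⟩
    have hn2r : n = 2 * (2 * r + 1) := by omega
    have hnat : (n/2) * (n/2) = n/2 + n * r := by rw [hr, hn2r]; ring
    have hmm : m' * m' = m' := by
      calc m' * m' = (((n/2) * (n/2) : ℕ) : ZMod n) := by rw [hm']; push_cast; ring
      _ = ((n/2 + n * r : ℕ) : ZMod n) := by rw [hnat]
      _ = m' := by rw [hm']; push_cast [ZMod.natCast_self]; ring
    have hiso' := hiso _ hGa _ hGb
    rw [sympForm_lft n m' m' (by linear_combination m' * hm2) α β, hom1, kap_one,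
      mul_one, hmm] at hiso'
    exact hm0 hiso'
  · -- Case B : d₁ ≡ d₂ ≡ 2 (mod 4)
    have hd1even : d₁ % 2 = 0 := by omega
    have h4nd1 : ¬ (4 ∣ d₁) := fun hdd => by
      have h44 := hdd.trans hdvd
      omega
    have hd14 : d₁ % 4 = 2 := by omega
    obtain ⟨a, hA⟩ : ∃ a, d₁ = 4 * a + 2 := ⟨d₁ / 4, by omega⟩
    obtain ⟨b, hB⟩ : ∃ b, d₂ = 4 * b + 2 := ⟨d₂ / 4, by omega⟩
    set s := (2*a+1) * (2*b+1) with hsdef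
    have hns : n = 4 * s := by rw [hn, hA, hB, hsdef]; ring
    have hsodd : s % 2 = 1 := by
      have h1 : (2*a+1) % 2 = 1 := by omega
      have h2 : (2*b+1) % 2 = 1 := by omega
      rw [hsdef, Nat.mul_mod, h1, h2]
    set q' : ZMod n := ((s : ℕ) : ZMod n) with hq'
    have hm2q : m' = 2 * q' := by
      have hhalf : n / 2 = s + s := by omega
      rw [hm', hq', hhalf]
      push_cast
      ring
    have h4q : (4 : ZMod n) * q' = 0 := by
      have h44 : ((4 * s : ℕ) : ZMod n) = 0 := by rw [← hns]; exact ZMod.natCast_self n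
      rw [hq', show ((4:ZMod n)) = ((4:ℕ):ZMod n) by push_cast; rfl, ← Nat.cast_mul, h44]
    have hq'm' : q' * m' + q' * m' = 0 := by
      rw [hm2q]; linear_combination q' * h4q
    -- the structure of 4-torsion elements of G
    have hBstr : ∀ u : M n, u ∈ G → u + u + u + u = 0 →
        u = 0 ∨ u = lft n m' α ∨ u = lft n m' β ∨ u = lft n m' α + lft n m' β := by
      intro u hu h4u
      refine bstruct n s hns hsodd G hcard _ _ hGa hGb ?_ ?_ ?_ ?_ ?_ u hu h4u
      · rw [← lft_add n m' hm2, V2_add_self, lft_zero]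
      · rw [← lft_add n m' hm2, V2_add_self, lft_zero]
      · intro h0
        exact hα0 (lft_inj n m' hm0 α 0 (by rw [h0, lft_zero]))
      · intro h0
        exact hβ0 (lft_inj n m' hm0 β 0 (by rw [h0, lft_zero]))
      · intro hee
        exact hαβ (lft_inj n m' hm0 α β hee)
    -- choose the pattern c
    obtain ⟨c, hc1, hc2, hc0, hca, hcb, hcab⟩ := D2 α β hom1
    set v : M n := lft n q' c with hv
    have hcomp4 : ∀ tt : ZMod 2, q' * kap n tt + q' * kap n tt + q' * kap n tt + q' * kap n tt = 0 := by
      intro tt; linear_combination (kap n tt) * h4q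
    have h4v : v + v + v + v = 0 := by
      rw [hv]
      simp only [lft, Prod.mk_add_mk, Prod.ext_iff, Prod.fst_zero, Prod.snd_zero]
      exact ⟨hcomp4 _, hcomp4 _, hcomp4 _, hcomp4 _⟩
    have h2v : v + v = lft n m' c := by
      rw [hv]
      simp only [lft, Prod.mk_add_mk, Prod.mk.injEq]
      refine ⟨?_, ?_, ?_, ?_⟩ <;> (rw [hm2q]; ring)
    -- v lies in the perp of G
    have hperp' : ∀ g' ∈ G, sympForm n v g' = 0 := by
      intro g' hg'
      have hcop4s : Nat.Coprime 4 s := by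
        have h2s : Nat.Coprime 2 s := (Nat.prime_two.coprime_iff_not_dvd).mpr (by omega)
        have := h2s.pow_left 2
        norm_num at this
        exact this
      have h4t : (4:ℕ) • sympForm n v g' = 0 := by
        have e4 : sympForm n (v + v + v + v) g'
            = sympForm n v g' + sympForm n v g' + sympForm n v g' + sympForm n v g' := by
          rw [sympForm_add_left, sympForm_add_left, sympForm_add_left]
        rw [nsmul_four, ← e4, h4v, sympForm_zero_left]
      have hst : (s:ℕ) • sympForm n v g' = 0 := by
        rw [← sympForm_nsmul_right]
        have hsg : (s:ℕ) • g' ∈ G := AddSubgroup.nsmul_mem G hg' s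
        have h4sg : (s:ℕ) • g' + s • g' + s • g' + s • g' = 0 := by
          rw [← nsmul_four, smul_smul, ← hns]
          exact Mn_card_nsmul n g'
        rcases hBstr _ hsg h4sg with h0 | hA' | hB' | hAB
        · rw [h0, sympForm_zero_right]
        · rw [hA', hv, sympForm_lft n q' m' hq'm' c α, hc1, kap_zero, mul_zero]
        · rw [hB', hv, sympForm_lft n q' m' hq'm' c β, hc2, kap_zero, mul_zero]
        · rw [hAB, hv, ← lft_add n m' hm2, sympForm_lft n q' m' hq'm' c (α+β),
            D3, hc1, hc2, add_zero, kap_zero, mul_zero]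
      exact eq_zero_of_coprime_nsmul hcop4s h4t hst
    have hvP : v ∈ perp n G := hperp'
    -- 2v is not in G
    have h2vnotG : lft n m' c ∉ G := by
      intro hcg
      have hLL : lft n m' c + lft n m' c = 0 := by
        rw [← lft_add n m' hm2, V2_add_self, lft_zero]
      have h4c : lft n m' c + lft n m' c + lft n m' c + lft n m' c = 0 := by
        rw [hLL, zero_add, hLL]
      rcases hBstr _ hcg h4c with h0 | hA' | hB' | hAB
      · exact hc0 (lft_inj n m' hm0 c 0 (by rw [h0, lft_zero]))
      · exact hca (lft_inj n m' hm0 c α hA')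
      · exact hcb (lft_inj n m' hm0 c β hB')
      · exact hcab (lft_inj n m' hm0 c (α+β) (by rw [hAB]; exact (lft_add n m' hm2 α β).symm))
    -- pass to the quotient
    obtain ⟨e⟩ := hquot
    set N := G.addSubgroupOf (perp n G) with hN
    set vP : perp n G := ⟨v, hvP⟩ with hvPdef
    set vq : (perp n G) ⧸ N := QuotientAddGroup.mk vP with hvq
    have h4vP : vP + vP + vP + vP = 0 := by
      refine Subtype.ext ?_
      push_cast [hvPdef]
      exact h4v
    have h4vq : vq + vq + vq + vq = 0 := by
      rw [hvq, ← QuotientAddGroup.mk_add, ← QuotientAddGroup.mk_add, ← QuotientAddGroup.mk_add,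
        h4vP]
      rfl
    have h2vq : vq + vq ≠ 0 := by
      rw [hvq, ← QuotientAddGroup.mk_add]
      intro h0
      rw [QuotientAddGroup.eq_zero_iff] at h0
      rw [hN, AddSubgroup.mem_addSubgroupOf] at h0
      have hco : ((vP + vP : perp n G) : M n) = lft n m' c := by
        push_cast [hvPdef]
        exact h2v
      rw [hco] at h0
      exact h2vnotG h0
    have h4e : e vq + e vq + e vq + e vq = 0 := by
      rw [← map_add, ← map_add, ← map_add, h4vq, map_zero]
    have h2e : e vq + e vq = 0 := target_two_step d₁ d₂ hd14 hd24 (e vq) h4e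
    apply h2vq
    apply e.injective
    rw [map_add, map_zero]
    exact h2e

/-- Lemma (Lemma `group` in the paper): if `G` is an isotropic subgroup of
`(ZMod (d₁d₂))⁴` of cardinality `d₁d₂` with `G^⊥/G ≅ (ZMod d₁)² × (ZMod d₂)²`, and three
pairwise distinct Weierstrass 2-torsion elements lie in a common coset of `G`,
then `4 ∣ d₂`. -/
theorem stmt_0 (d₁ d₂ : ℕ) (hd₁ : 0 < d₁) (hd₂ : 0 < d₂) (hdvd : d₁ ∣ d₂) (heven : 2 ∣ d₂)
    (G : AddSubgroup (M (d₁ * d₂)))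
    (hiso : IsIsotropic (d₁ * d₂) G)
    (hcard : Nat.card G = d₁ * d₂)
    (hquot : Nonempty
      ((perp (d₁ * d₂) G ⧸ G.addSubgroupOf (perp (d₁ * d₂) G)) ≃+
        (ZMod d₁ × ZMod d₁ × ZMod d₂ × ZMod d₂)))
    (x y z : M (d₁ * d₂))
    (hx : x ∈ weierstrassSet (d₁ * d₂))
    (hy : y ∈ weierstrassSet (d₁ * d₂))
    (hz : z ∈ weierstrassSet (d₁ * d₂))
    (hxy : x ≠ y) (hxz : x ≠ z) (hyz : y ≠ z)
    (hGxy : x - y ∈ G) (hGxz : x - z ∈ G) (hGyz : y - z ∈ G) :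
    d₂ % 4 = 0 :=
  stmt0_aux d₁ d₂ (d₁ * d₂) hd₁ hd₂ hdvd heven rfl G hiso hcard hquot x y z hx hy hz
    hxy hxz hyz hGxy hGxz hGyz
end

section
/- Let d₁, d₂ be positive integers with d₁ ∣ d₂, set n := d₁·d₂, and let a, b be positive integers with a·b = d₁²·d₂, a ∣ n and b ∣ n. In M = (ZMod n)⁴ with the standard symplectic form ω, let G be the subgroup generated by a·e₁', b·f₁' and d₂·e₂'. Then G is isotropic, G has cardinality n, G^⊥ is the subgroup generated by (n/b)·e₁', (n/a)·f₁', e₂' and d₁·f₂', and the quotient G^⊥/G is isomorphic as an abelian group to ZMod d₁ × ZMod d₁ × ZMod d₂ × ZMod d₂. -/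
lemma key_exists_iff (N c m e A : ℕ) (hc : 0 < c) (hnN : c * m = N) (he : e ∣ m)
    (hA : e * c = A) (k : ℤ) :
    (∃ s : ℤ, (s : ZMod N) * (A : ZMod N) = (k : ZMod N) * (c : ZMod N)) ↔
      (e : ℤ) ∣ k := by
  subst hA
  constructor
  · rintro ⟨s, hs⟩
    have h0 : (((k - s * e) * c : ℤ) : ZMod N) = 0 := by
      push_cast
      push_cast at hs
      linear_combination -hs
    rw [ZMod.intCast_zmod_eq_zero_iff_dvd, ← hnN] at h0
    push_cast at h0
    rw [mul_comm (c : ℤ) (m : ℤ)] at h0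
    have hcne : (c : ℤ) ≠ 0 := by exact_mod_cast hc.ne'
    rw [mul_dvd_mul_iff_right hcne] at h0
    have h1 : (e : ℤ) ∣ k - s * e := dvd_trans (Int.natCast_dvd_natCast.mpr he) h0
    have h2 : (e : ℤ) ∣ s * e := dvd_mul_left _ _
    have := dvd_add h1 h2
    simpa using this
  · rintro ⟨t, rfl⟩
    exact ⟨t, by push_cast; ring⟩

lemma key_mul_eq_zero_iff (N c m : ℕ) (hN : N ≠ 0) (hnN : c * m = N) (x : ZMod N) :
    (c : ZMod N) * x = 0 ↔ ∃ l : ℤ, x = (l : ZMod N) * (m : ZMod N) := by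
  haveI : NeZero N := ⟨hN⟩
  have hc : 0 < c := by
    rcases Nat.eq_zero_or_pos c with h | h
    · exact absurd (by rw [← hnN, h, zero_mul]) hN
    · exact h
  constructor
  · intro h
    have hx : ((x.val : ℕ) : ZMod N) = x := ZMod.natCast_rightInverse x
    rw [← hx, ← Nat.cast_mul, ZMod.natCast_eq_zero_iff] at h
    obtain ⟨t, ht⟩ := h
    have hval : x.val = m * t := by
      have : c * x.val = c * (m * t) := by rw [ht, ← hnN]; ring
      exact Nat.eq_of_mul_eq_mul_left hc this
    refine ⟨t, ?_⟩
    rw [← hx, hval]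
    push_cast; ring
  · rintro ⟨l, rfl⟩
    have h0 : ((c * m : ℕ) : ZMod N) = 0 := by rw [hnN, ZMod.natCast_self]
    push_cast at h0
    calc (c : ZMod N) * ((l : ZMod N) * m) = (l : ZMod N) * ((c : ZMod N) * m) := by ring
    _ = 0 := by rw [h0, mul_zero]

lemma key_mul_zero_iff_dvd (N c m : ℕ) (hc : 0 < c) (hnN : c * m = N) (k : ℤ) :
    (k : ZMod N) * (c : ZMod N) = 0 ↔ (m : ℤ) ∣ k := by
  rw [show (k : ZMod N) * (c : ZMod N) = ((k * c : ℤ) : ZMod N) by push_cast; ring,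
    ZMod.intCast_zmod_eq_zero_iff_dvd, ← hnN]
  push_cast
  rw [mul_comm (c : ℤ) (m : ℤ), mul_comm k (c : ℤ)]
  constructor
  · intro h
    have hcne : (c : ℤ) ≠ 0 := by exact_mod_cast hc.ne'
    rcases h with ⟨t, ht⟩
    refine ⟨t, ?_⟩
    have : (c : ℤ) * k = (c : ℤ) * ((m : ℤ) * t) := by rw [ht]; ring
    exact mul_left_cancel₀ hcne this
  · rintro ⟨t, rfl⟩; exact ⟨t, by ring⟩

/-- The parametrization of `G^⊥` by `ℤ⁴`. -/
def rhoHom (n b' a' d₁ : ℕ) : (ℤ × ℤ × ℤ × ℤ) →+ M n where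
  toFun k := ((k.1 : ZMod n) * (b' : ZMod n), (k.2.1 : ZMod n) * 1,
    (k.2.2.1 : ZMod n) * (a' : ZMod n), (k.2.2.2 : ZMod n) * (d₁ : ZMod n))
  map_zero' := by simp
  map_add' k l := by
    simp only [Prod.fst_add, Prod.snd_add, Prod.mk_add_mk, Prod.mk.injEq]
    push_cast
    exact ⟨by ring, by ring, by ring, by ring⟩

@[simp] lemma rhoHom_apply (n b' a' d₁ : ℕ) (k : ℤ × ℤ × ℤ × ℤ) :
    rhoHom n b' a' d₁ k = ((k.1 : ZMod n) * (b' : ZMod n), (k.2.1 : ZMod n) * 1,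
      (k.2.2.1 : ZMod n) * (a' : ZMod n), (k.2.2.2 : ZMod n) * (d₁ : ZMod n)) := rfl

/-- The projection of `ℤ⁴` onto `(ZMod d₁)² × (ZMod d₂)²` (with coordinates shuffled). -/
def phiHom (d₁ d₂ : ℕ) : (ℤ × ℤ × ℤ × ℤ) →+ (ZMod d₁ × ZMod d₁ × ZMod d₂ × ZMod d₂) where
  toFun k := ((k.1 : ZMod d₁), (k.2.2.1 : ZMod d₁), (k.2.1 : ZMod d₂), (k.2.2.2 : ZMod d₂))
  map_zero' := by simp
  map_add' k l := by
    simp only [Prod.fst_add, Prod.snd_add, Prod.mk_add_mk, Prod.mk.injEq]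
    push_cast
    exact ⟨rfl, rfl, rfl, rfl⟩

@[simp] lemma phiHom_apply (d₁ d₂ : ℕ) (k : ℤ × ℤ × ℤ × ℤ) :
    phiHom d₁ d₂ k = ((k.1 : ZMod d₁), (k.2.2.1 : ZMod d₁), (k.2.1 : ZMod d₂),
      (k.2.2.2 : ZMod d₂)) := rfl


set_option maxHeartbeats 1000000 in
/-- Example `quadruplo`, first part: with `ab = d₁²d₂`, `a ∣ n`, `b ∣ n`
(`n = d₁d₂`), the subgroup `G = ⟨a·e₁', b·f₁', d₂·e₂'⟩` is isotropic of cardinality `n`, has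
orthogonal complement `⟨(n/b)e₁', (n/a)f₁', e₂', d₁f₂'⟩`, and
`G^⊥/G ≅ (ZMod d₁)² × (ZMod d₂)²`. -/
theorem stmt_5 (d₁ d₂ a b : ℕ) (hd₁ : 0 < d₁) (hd₂ : 0 < d₂) (hdvd : d₁ ∣ d₂)
    (ha : 0 < a) (hb : 0 < b) (hab : a * b = d₁ ^ 2 * d₂)
    (han : a ∣ d₁ * d₂) (hbn : b ∣ d₁ * d₂)
    (G : AddSubgroup (M (d₁ * d₂)))
    (hG : G = AddSubgroup.closure
      {a • e₁' (d₁ * d₂), b • f₁' (d₁ * d₂), d₂ • e₂' (d₁ * d₂)}) :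
    IsIsotropic (d₁ * d₂) G ∧
    Nat.card G = d₁ * d₂ ∧
    perp (d₁ * d₂) G = AddSubgroup.closure
      {((d₁ * d₂) / b) • e₁' (d₁ * d₂), ((d₁ * d₂) / a) • f₁' (d₁ * d₂),
        e₂' (d₁ * d₂), d₁ • f₂' (d₁ * d₂)} ∧
    Nonempty
      ((perp (d₁ * d₂) G ⧸ G.addSubgroupOf (perp (d₁ * d₂) G)) ≃+
        (ZMod d₁ × ZMod d₁ × ZMod d₂ × ZMod d₂)) := by
  have hn0 : d₁ * d₂ ≠ 0 := by positivity
  haveI : NeZero (d₁ * d₂) := ⟨hn0⟩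
  obtain ⟨a', ha'⟩ := han
  obtain ⟨b', hb'⟩ := hbn
  have ha'0 : 0 < a' := by
    rcases Nat.eq_zero_or_pos a' with h | h
    · exfalso; apply hn0; rw [ha', h, mul_zero]
    · exact h
  have hb'0 : 0 < b' := by
    rcases Nat.eq_zero_or_pos b' with h | h
    · exfalso; apply hn0; rw [hb', h, mul_zero]
    · exact h
  have hA : a = d₁ * b' := by
    have h1 : a * b = (d₁ * b') * b := by
      rw [hab, show d₁ ^ 2 * d₂ = d₁ * (d₁ * d₂) by ring, hb']; ring
    exact Nat.eq_of_mul_eq_mul_right hb h1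
  have hB : b = d₁ * a' := by
    have h1 : b * a = (d₁ * a') * a := by
      rw [mul_comm b a, hab, show d₁ ^ 2 * d₂ = d₁ * (d₁ * d₂) by ring, ha']; ring
    exact Nat.eq_of_mul_eq_mul_right ha h1
  have hdivb : (d₁ * d₂) / b = b' := by rw [hb', Nat.mul_div_cancel_left _ hb]
  have hdiva : (d₁ * d₂) / a = a' := by rw [ha', Nat.mul_div_cancel_left _ ha]
  -- the product description of G
  have hGP : G = (AddSubgroup.zmultiples ((a : ℕ) : ZMod (d₁ * d₂))).prod
      ((AddSubgroup.zmultiples ((d₂ : ℕ) : ZMod (d₁ * d₂))).prod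
        ((AddSubgroup.zmultiples ((b : ℕ) : ZMod (d₁ * d₂))).prod ⊥)) := by
    rw [hG]
    apply le_antisymm
    · rw [AddSubgroup.closure_le]
      rintro x hx
      simp only [Set.mem_insert_iff, Set.mem_singleton_iff] at hx
      rcases hx with rfl | rfl | rfl
      · refine AddSubgroup.mem_prod.mpr ⟨?_, AddSubgroup.mem_prod.mpr
          ⟨?_, AddSubgroup.mem_prod.mpr ⟨?_, ?_⟩⟩⟩ <;>
          simp [e₁', Prod.smul_mk, nsmul_eq_mul, AddSubgroup.mem_zmultiples_iff] <;>
          exact ⟨0, by simp⟩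
      · refine AddSubgroup.mem_prod.mpr ⟨?_, AddSubgroup.mem_prod.mpr
          ⟨?_, AddSubgroup.mem_prod.mpr ⟨?_, ?_⟩⟩⟩ <;>
          simp [f₁', Prod.smul_mk, nsmul_eq_mul, AddSubgroup.mem_zmultiples_iff] <;>
          exact ⟨0, by simp⟩
      · refine AddSubgroup.mem_prod.mpr ⟨?_, AddSubgroup.mem_prod.mpr
          ⟨?_, AddSubgroup.mem_prod.mpr ⟨?_, ?_⟩⟩⟩ <;>
          simp [e₂', Prod.smul_mk, nsmul_eq_mul, AddSubgroup.mem_zmultiples_iff] <;>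
          exact ⟨0, by simp⟩
    · rintro ⟨x1, x2, x3, x4⟩ hx
      simp only [AddSubgroup.mem_prod, AddSubgroup.mem_zmultiples_iff,
        AddSubgroup.mem_bot, zsmul_eq_mul] at hx
      obtain ⟨⟨k1, hk1⟩, ⟨k2, hk2⟩, ⟨k3, hk3⟩, h4⟩ := hx
      have hxeq : ((x1, x2, x3, x4) : M (d₁ * d₂)) =
          k1 • (a • e₁' (d₁ * d₂)) + k2 • (d₂ • e₂' (d₁ * d₂)) + k3 • (b • f₁' (d₁ * d₂)) := by
        simp only [e₁', e₂', f₁', Prod.smul_mk, nsmul_eq_mul, zsmul_eq_mul,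
          Prod.mk_add_mk, Prod.mk.injEq, smul_zero, mul_one, mul_zero]
        refine ⟨?_, ?_, ?_, ?_⟩
        · rw [← hk1]; ring
        · rw [← hk2]; ring
        · rw [← hk3]; ring
        · simp [h4]
      rw [hxeq]
      refine add_mem (add_mem ?_ ?_) ?_ <;>
        exact AddSubgroup.zsmul_mem _ (AddSubgroup.subset_closure (by simp)) _
  have hGmem : ∀ g : M (d₁ * d₂), g ∈ G ↔
      ((∃ k : ℤ, (k : ZMod (d₁ * d₂)) * (a : ZMod (d₁ * d₂)) = g.1) ∧
       (∃ k : ℤ, (k : ZMod (d₁ * d₂)) * (d₂ : ZMod (d₁ * d₂)) = g.2.1) ∧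
       (∃ k : ℤ, (k : ZMod (d₁ * d₂)) * (b : ZMod (d₁ * d₂)) = g.2.2.1) ∧
       g.2.2.2 = 0) := by
    intro g
    rw [hGP]
    simp only [AddSubgroup.mem_prod, AddSubgroup.mem_zmultiples_iff,
      AddSubgroup.mem_bot, zsmul_eq_mul]
  -- isotropy
  have hab0 : (a : ZMod (d₁ * d₂)) * (b : ZMod (d₁ * d₂)) = 0 := by
    rw [← Nat.cast_mul, hab, show d₁ ^ 2 * d₂ = d₁ * (d₁ * d₂) by ring, Nat.cast_mul,
      ZMod.natCast_self, mul_zero]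
  have hiso : IsIsotropic (d₁ * d₂) G := by
    intro g hg h hh
    obtain ⟨⟨k1, hk1⟩, ⟨k2, hk2⟩, ⟨k3, hk3⟩, hg4⟩ := (hGmem g).mp hg
    obtain ⟨⟨l1, hl1⟩, ⟨l2, hl2⟩, ⟨l3, hl3⟩, hh4⟩ := (hGmem h).mp hh
    show sympForm _ g h = 0
    unfold sympForm
    rw [← hk1, ← hk2, ← hk3, hg4, ← hl1, ← hl2, ← hl3, hh4]
    linear_combination ((k1 : ZMod (d₁ * d₂)) * l3 - (k3 : ZMod (d₁ * d₂)) * l1) * hab0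
  -- cardinality
  have hcard : Nat.card G = d₁ * d₂ := by
    rw [hGP, Nat.card_congr (AddSubgroup.prodEquiv _ _).toEquiv, Nat.card_prod,
      Nat.card_congr (AddSubgroup.prodEquiv _ _).toEquiv, Nat.card_prod,
      Nat.card_congr (AddSubgroup.prodEquiv _ _).toEquiv, Nat.card_prod]
    rw [Nat.card_zmultiples, Nat.card_zmultiples, Nat.card_zmultiples,
      ZMod.addOrderOf_coe _ hn0, ZMod.addOrderOf_coe _ hn0, ZMod.addOrderOf_coe _ hn0]
    rw [Nat.gcd_eq_right ⟨a', ha'⟩, Nat.gcd_eq_right ⟨b', hb'⟩,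
      Nat.gcd_eq_right (dvd_mul_left d₂ d₁)]
    rw [hdiva, hdivb, Nat.mul_div_cancel d₁ hd₂, AddSubgroup.card_bot]
    rw [ha', hA]; ring
  -- generators of G
  have hg1 : a • e₁' (d₁ * d₂) ∈ G := by
    rw [hG]; exact AddSubgroup.subset_closure (by simp)
  have hg2 : b • f₁' (d₁ * d₂) ∈ G := by
    rw [hG]; exact AddSubgroup.subset_closure (by simp)
  have hg3 : d₂ • e₂' (d₁ * d₂) ∈ G := by
    rw [hG]; exact AddSubgroup.subset_closure (by simp)
  -- characterization of the perp
  have hQmem : ∀ x : M (d₁ * d₂), x ∈ perp (d₁ * d₂) G ↔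
      ((∃ k : ℤ, x.1 = (k : ZMod (d₁ * d₂)) * (b' : ZMod (d₁ * d₂))) ∧
       (∃ k : ℤ, x.2.2.1 = (k : ZMod (d₁ * d₂)) * (a' : ZMod (d₁ * d₂))) ∧
       (∃ k : ℤ, x.2.2.2 = (k : ZMod (d₁ * d₂)) * (d₁ : ZMod (d₁ * d₂)))) := by
    intro x
    constructor
    · intro hx
      have h1 : sympForm (d₁ * d₂) x (b • f₁' (d₁ * d₂)) = 0 := hx _ hg2
      have h2 : sympForm (d₁ * d₂) x (a • e₁' (d₁ * d₂)) = 0 := hx _ hg1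
      have h3 : sympForm (d₁ * d₂) x (d₂ • e₂' (d₁ * d₂)) = 0 := hx _ hg3
      simp only [sympForm, e₁', e₂', f₁', Prod.smul_mk, nsmul_eq_mul, smul_zero,
        mul_zero, mul_one, add_zero, zero_add, sub_zero, zero_sub, neg_eq_zero,
        zero_mul, sub_self] at h1 h2 h3
      refine ⟨?_, ?_, ?_⟩
      · exact (key_mul_eq_zero_iff _ b b' hn0 hb'.symm x.1).mp (by linear_combination h1)
      · exact (key_mul_eq_zero_iff _ a a' hn0 ha'.symm x.2.2.1).mp (by linear_combination h2)
      · exact (key_mul_eq_zero_iff _ d₂ d₁ hn0 (mul_comm d₂ d₁) x.2.2.2).mp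
          (by linear_combination h3)
    · rintro ⟨⟨l1, hl1⟩, ⟨l3, hl3⟩, ⟨l4, hl4⟩⟩ g hg
      obtain ⟨⟨k1, hk1⟩, ⟨k2, hk2⟩, ⟨k3, hk3⟩, h4⟩ := (hGmem g).mp hg
      have hbb' : (b' : ZMod (d₁ * d₂)) * (b : ZMod (d₁ * d₂)) = 0 := by
        rw [← Nat.cast_mul, mul_comm b' b, ← hb', ZMod.natCast_self]
      have haa' : (a' : ZMod (d₁ * d₂)) * (a : ZMod (d₁ * d₂)) = 0 := by
        rw [← Nat.cast_mul, mul_comm a' a, ← ha', ZMod.natCast_self]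
      have hdd : (d₁ : ZMod (d₁ * d₂)) * (d₂ : ZMod (d₁ * d₂)) = 0 := by
        rw [← Nat.cast_mul, ZMod.natCast_self]
      show sympForm _ x g = 0
      unfold sympForm
      rw [hl1, hl3, hl4, ← hk1, ← hk2, ← hk3, h4]
      linear_combination ((l1 : ZMod (d₁ * d₂)) * k3) * hbb' -
        ((l3 : ZMod (d₁ * d₂)) * k1) * haa' - ((l4 : ZMod (d₁ * d₂)) * k2) * hdd
  -- perp G as a closure
  have hperpeq : perp (d₁ * d₂) G = AddSubgroup.closure
      {b' • e₁' (d₁ * d₂), a' • f₁' (d₁ * d₂), e₂' (d₁ * d₂), d₁ • f₂' (d₁ * d₂)} := by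
    apply le_antisymm
    · intro x hx
      obtain ⟨⟨l1, hl1⟩, ⟨l3, hl3⟩, ⟨l4, hl4⟩⟩ := (hQmem x).mp hx
      obtain ⟨l2, hl2⟩ : ∃ k : ℤ, x.2.1 = (k : ZMod (d₁ * d₂)) * 1 :=
        ⟨(x.2.1.val : ℤ), by push_cast; rw [mul_one, ZMod.natCast_rightInverse x.2.1]⟩
      have hxeq : x = l1 • (b' • e₁' (d₁ * d₂)) + l2 • e₂' (d₁ * d₂) +
          l3 • (a' • f₁' (d₁ * d₂)) + l4 • (d₁ • f₂' (d₁ * d₂)) := by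
        obtain ⟨x1, x2, x3, x4⟩ := x
        simp only [e₁', e₂', f₁', f₂', Prod.smul_mk, nsmul_eq_mul, zsmul_eq_mul,
          Prod.mk_add_mk, Prod.mk.injEq, smul_zero, mul_one, mul_zero] at hl1 hl2 hl3 hl4 ⊢
        refine ⟨?_, ?_, ?_, ?_⟩
        · linear_combination hl1
        · linear_combination hl2
        · linear_combination hl3
        · linear_combination hl4
      rw [hxeq]
      refine add_mem (add_mem (add_mem ?_ ?_) ?_) ?_ <;>
        exact AddSubgroup.zsmul_mem _ (AddSubgroup.subset_closure (by simp)) _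
    · rw [AddSubgroup.closure_le]
      rintro x hx
      simp only [Set.mem_insert_iff, Set.mem_singleton_iff] at hx
      rcases hx with rfl | rfl | rfl | rfl <;> apply (hQmem _).mpr
      · exact ⟨⟨1, by simp [e₁', Prod.smul_mk, nsmul_eq_mul]⟩,
          ⟨0, by simp [e₁', Prod.smul_mk]⟩, ⟨0, by simp [e₁', Prod.smul_mk]⟩⟩
      · exact ⟨⟨0, by simp [f₁', Prod.smul_mk]⟩,
          ⟨1, by simp [f₁', Prod.smul_mk, nsmul_eq_mul]⟩, ⟨0, by simp [f₁', Prod.smul_mk]⟩⟩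
      · exact ⟨⟨0, by simp [e₂']⟩, ⟨0, by simp [e₂']⟩, ⟨0, by simp [e₂']⟩⟩
      · exact ⟨⟨0, by simp [f₂', Prod.smul_mk]⟩, ⟨0, by simp [f₂', Prod.smul_mk]⟩,
          ⟨1, by simp [f₂', Prod.smul_mk, nsmul_eq_mul]⟩⟩
  -- the quotient
  have hρmem : ∀ k, rhoHom (d₁ * d₂) b' a' d₁ k ∈ perp (d₁ * d₂) G := by
    intro k
    exact (hQmem _).mpr ⟨⟨k.1, rfl⟩, ⟨k.2.2.1, rfl⟩, ⟨k.2.2.2, rfl⟩⟩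
  have hquot : Nonempty
      ((perp (d₁ * d₂) G ⧸ G.addSubgroupOf (perp (d₁ * d₂) G)) ≃+
        (ZMod d₁ × ZMod d₁ × ZMod d₂ × ZMod d₂)) := by
    set ρ' : (ℤ × ℤ × ℤ × ℤ) →+ (perp (d₁ * d₂) G) :=
      (rhoHom (d₁ * d₂) b' a' d₁).codRestrict _ hρmem with hρ'def
    set π : (ℤ × ℤ × ℤ × ℤ) →+
        (perp (d₁ * d₂) G ⧸ G.addSubgroupOf (perp (d₁ * d₂) G)) :=
      (QuotientAddGroup.mk' (G.addSubgroupOf (perp (d₁ * d₂) G))).comp ρ' with hπdef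
    have hπsurj : Function.Surjective π := by
      intro q
      induction q using QuotientAddGroup.induction_on with
      | H z =>
        obtain ⟨⟨l1, hl1⟩, ⟨l3, hl3⟩, ⟨l4, hl4⟩⟩ := (hQmem (z : M (d₁ * d₂))).mp z.2
        obtain ⟨l2, hl2⟩ : ∃ k : ℤ, (z : M (d₁ * d₂)).2.1 = (k : ZMod (d₁ * d₂)) * 1 :=
          ⟨((z : M (d₁ * d₂)).2.1.val : ℤ), by
            push_cast; rw [mul_one, ZMod.natCast_rightInverse]⟩
        refine ⟨(l1, l2, l3, l4), ?_⟩
        have hz : ρ' (l1, l2, l3, l4) = z := by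
          apply Subtype.ext
          show ((l1 : ZMod (d₁ * d₂)) * b', (l2 : ZMod (d₁ * d₂)) * 1,
            (l3 : ZMod (d₁ * d₂)) * a', (l4 : ZMod (d₁ * d₂)) * d₁) = (z : M (d₁ * d₂))
          refine Prod.ext hl1.symm (Prod.ext hl2.symm (Prod.ext hl3.symm hl4.symm))
        show (QuotientAddGroup.mk' _) (ρ' (l1, l2, l3, l4)) = _
        rw [hz]
        rfl
    have hΦsurj : Function.Surjective (phiHom d₁ d₂) := by
      rintro ⟨t1, t2, t3, t4⟩
      obtain ⟨k1, hk1⟩ := ZMod.intCast_surjective t1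
      obtain ⟨k2, hk2⟩ := ZMod.intCast_surjective t2
      obtain ⟨k3, hk3⟩ := ZMod.intCast_surjective t3
      obtain ⟨k4, hk4⟩ := ZMod.intCast_surjective t4
      exact ⟨(k1, k3, k2, k4), by simp [hk1, hk2, hk3, hk4]⟩
    have hker : π.ker = (phiHom d₁ d₂).ker := by
      ext k
      have hmem : π k = 0 ↔ rhoHom (d₁ * d₂) b' a' d₁ k ∈ G := by
        rw [hπdef, AddMonoidHom.comp_apply, QuotientAddGroup.mk'_apply,
          QuotientAddGroup.eq_zero_iff, AddSubgroup.mem_addSubgroupOf]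
        rfl
      rw [AddMonoidHom.mem_ker, AddMonoidHom.mem_ker, hmem, hGmem]
      have c1 : (∃ s : ℤ, (s : ZMod (d₁ * d₂)) * (a : ZMod (d₁ * d₂)) =
            (k.1 : ZMod (d₁ * d₂)) * (b' : ZMod (d₁ * d₂))) ↔ (d₁ : ℤ) ∣ k.1 :=
        key_exists_iff (d₁ * d₂) b' b d₁ a hb'0 (by rw [mul_comm]; exact hb'.symm)
          ⟨a', hB⟩ hA.symm k.1
      have c2 : (∃ s : ℤ, (s : ZMod (d₁ * d₂)) * (d₂ : ZMod (d₁ * d₂)) =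
            (k.2.1 : ZMod (d₁ * d₂)) * 1) ↔ (d₂ : ℤ) ∣ k.2.1 := by
        have := key_exists_iff (d₁ * d₂) 1 (d₁ * d₂) d₂ d₂ one_pos (one_mul _)
          (dvd_mul_left d₂ d₁) (mul_one d₂) k.2.1
        simpa using this
      have c3 : (∃ s : ℤ, (s : ZMod (d₁ * d₂)) * (b : ZMod (d₁ * d₂)) =
            (k.2.2.1 : ZMod (d₁ * d₂)) * (a' : ZMod (d₁ * d₂))) ↔ (d₁ : ℤ) ∣ k.2.2.1 :=
        key_exists_iff (d₁ * d₂) a' a d₁ b ha'0 (by rw [mul_comm]; exact ha'.symm)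
          ⟨b', hA⟩ hB.symm k.2.2.1
      have c4 : ((k.2.2.2 : ZMod (d₁ * d₂)) * (d₁ : ZMod (d₁ * d₂)) = 0) ↔
          (d₂ : ℤ) ∣ k.2.2.2 :=
        key_mul_zero_iff_dvd (d₁ * d₂) d₁ d₂ hd₁ rfl k.2.2.2
      rw [show ((rhoHom (d₁ * d₂) b' a' d₁) k).1 = (k.1 : ZMod (d₁ * d₂)) * b' from rfl]
      rw [show ((rhoHom (d₁ * d₂) b' a' d₁) k).2.1 = (k.2.1 : ZMod (d₁ * d₂)) * 1 from rfl]
      rw [show ((rhoHom (d₁ * d₂) b' a' d₁) k).2.2.1 =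
        (k.2.2.1 : ZMod (d₁ * d₂)) * a' from rfl]
      rw [show ((rhoHom (d₁ * d₂) b' a' d₁) k).2.2.2 =
        (k.2.2.2 : ZMod (d₁ * d₂)) * d₁ from rfl]
      rw [c1, c2, c3, c4]
      rw [show (phiHom d₁ d₂) k = ((k.1 : ZMod d₁), (k.2.2.1 : ZMod d₁),
        (k.2.1 : ZMod d₂), (k.2.2.2 : ZMod d₂)) from rfl]
      rw [Prod.ext_iff, Prod.ext_iff, Prod.ext_iff]
      simp only [Prod.fst_zero, Prod.snd_zero, ZMod.intCast_zmod_eq_zero_iff_dvd]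
      tauto
    have e1 := QuotientAddGroup.quotientKerEquivOfSurjective π hπsurj
    have e2 := QuotientAddGroup.quotientKerEquivOfSurjective (phiHom d₁ d₂) hΦsurj
    have e2' : ((ℤ × ℤ × ℤ × ℤ) ⧸ π.ker) ≃+ (ZMod d₁ × ZMod d₁ × ZMod d₂ × ZMod d₂) := by
      rw [hker]; exact e2
    exact ⟨e1.symm.trans e2'⟩
  refine ⟨hiso, hcard, ?_, hquot⟩
  rw [hdivb, hdiva]
  exact hperpeq
end

section
/- Let d₁, d₂ be positive integers with d₁ ∣ d₂, set n := d₁·d₂, and let a, b be positive integers with a·b = d₁²·d₂, 2a ∣ n and 2b ∣ n. Then d₂ ≡ 0 (mod 4), and the subgroup G of M = (ZMod n)⁴ generated by a·e₁', b·f₁' and d₂·e₂' contains the three Weierstrass 2-torsion elements e₁ := (n/2)·e₁', f₁ := (n/2)·f₁' and e₁ + f₁. -/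
/-- Example `quadruplo`, second part: if `ab = d₁²d₂`, `2a ∣ n`, `2b ∣ n`
(`n = d₁d₂`), then `4 ∣ d₂` and `G = ⟨a·e₁', b·f₁', d₂·e₂'⟩` contains the Weierstrass
2-torsion elements `e₁ = (n/2)e₁'`, `f₁ = (n/2)f₁'` and `e₁+f₁`. -/
theorem stmt_6 (d₁ d₂ a b : ℕ) (hd₁ : 0 < d₁) (hd₂ : 0 < d₂) (hdvd : d₁ ∣ d₂)
    (ha : 0 < a) (hb : 0 < b) (hab : a * b = d₁ ^ 2 * d₂)
    (han : 2 * a ∣ d₁ * d₂) (hbn : 2 * b ∣ d₁ * d₂)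
    (G : AddSubgroup (M (d₁ * d₂)))
    (hG : G = AddSubgroup.closure
      {a • e₁' (d₁ * d₂), b • f₁' (d₁ * d₂), d₂ • e₂' (d₁ * d₂)}) :
    d₂ % 4 = 0 ∧
    ((d₁ * d₂) / 2) • e₁' (d₁ * d₂) ∈ G ∧
    ((d₁ * d₂) / 2) • f₁' (d₁ * d₂) ∈ G ∧
    ((d₁ * d₂) / 2) • e₁' (d₁ * d₂) + ((d₁ * d₂) / 2) • f₁' (d₁ * d₂) ∈ G := by
  obtain ⟨c, hc⟩ := han
  have hc0 : 0 < c := by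
    rcases Nat.eq_zero_or_pos c with h | h
    · exfalso; rw [h, mul_zero] at hc; exact (Nat.mul_pos hd₁ hd₂).ne' hc
    · exact h
  -- b = 2 * d₁ * c
  have hb' : b = 2 * d₁ * c := by
    have h1 : a * b = a * (2 * d₁ * c) := by
      have : d₁ ^ 2 * d₂ = d₁ * (d₁ * d₂) := by ring
      rw [hab, this, hc]; ring
    exact Nat.eq_of_mul_eq_mul_left ha h1
  -- 2 * d₁ ∣ a
  have hda : 2 * d₁ ∣ a := by
    have h2 : (2 * d₁) * (2 * c) ∣ a * (2 * c) := by
      have : (2 * d₁) * (2 * c) = 2 * b := by rw [hb']; ring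
      rw [this]
      have : a * (2 * c) = 2 * a * c := by ring
      rw [this, ← hc]; exact hbn
    exact (Nat.mul_dvd_mul_iff_right (by omega : 0 < 2 * c)).mp h2
  obtain ⟨m, hm⟩ := hda
  have hd4 : d₂ = 4 * (m * c) := by
    have h3 : d₁ ^ 2 * d₂ = d₁ ^ 2 * (4 * (m * c)) := by
      rw [← hab, hm, hb']; ring
    exact Nat.eq_of_mul_eq_mul_left (by positivity) h3
  have hhalf : (d₁ * d₂) / 2 = a * c := by
    rw [hc, show 2 * a * c = (a * c) * 2 by ring, Nat.mul_div_cancel _ (by omega)]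
  refine ⟨by omega, ?_, ?_, ?_⟩
  · have he : ((d₁ * d₂) / 2) • e₁' (d₁ * d₂) = c • (a • e₁' (d₁ * d₂)) := by
      rw [smul_smul]
      rw [hhalf]; ring
    rw [hG, he]
    exact AddSubgroup.nsmul_mem _ (AddSubgroup.subset_closure (Set.mem_insert _ _)) c
  · have hf : ((d₁ * d₂) / 2) • f₁' (d₁ * d₂) = m • (b • f₁' (d₁ * d₂)) := by
      rw [smul_smul]
      rw [hhalf, hb', hm]; ring
    rw [hG, hf]
    exact AddSubgroup.nsmul_mem _ (AddSubgroup.subset_closure (Set.mem_insert_of_mem _ (Set.mem_insert _ _))) m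
  · have he : ((d₁ * d₂) / 2) • e₁' (d₁ * d₂) = c • (a • e₁' (d₁ * d₂)) := by
      rw [smul_smul, hhalf]; ring_nf
    have hf : ((d₁ * d₂) / 2) • f₁' (d₁ * d₂) = m • (b • f₁' (d₁ * d₂)) := by
      rw [smul_smul, hhalf, hb', hm]; ring_nf
    rw [hG, he, hf]
    exact AddSubgroup.add_mem _
      (AddSubgroup.nsmul_mem _ (AddSubgroup.subset_closure (Set.mem_insert _ _)) c)
      (AddSubgroup.nsmul_mem _ (AddSubgroup.subset_closure (Set.mem_insert_of_mem _ (Set.mem_insert _ _))) m)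
end

section
/- Let d₁, d₂ be positive integers with d₁ ∣ d₂ and d₂ ≡ 0 (mod 4), and set n := d₁·d₂. Then there exists an isotropic subgroup G of M = (ZMod n)⁴ (with respect to the standard symplectic form ω) such that G has cardinality n, the quotient G^⊥/G is isomorphic as an abelian group to ZMod d₁ × ZMod d₁ × ZMod d₂ × ZMod d₂, and G contains the three Weierstrass 2-torsion elements e₁ := (n/2)·e₁', f₁ := (n/2)·f₁' and e₁+f₁. (For instance, one may take G generated by a·e₁', b·f₁', d₂·e₂' with a := d₁d₂/2 and b := 2d₁.) -/
open AddSubgroup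

lemma smul_mem_zmultiples_iff (n m k l : ℕ) (hn : n ≠ 0) (hm : m ≠ 0)
    (hmk : m * k = l) (hl : l ∣ n) (z : ℤ) :
    z • ((m : ZMod n)) ∈ zmultiples ((l : ZMod n)) ↔ (k : ℤ) ∣ z := by
  subst hmk
  constructor
  · rintro ⟨s, hs⟩
    have hs' : ((s * (m * k) - z * m : ℤ) : ZMod n) = 0 := by
      simp only [zsmul_eq_mul] at hs
      push_cast
      rw [sub_eq_zero, ← hs]
      push_cast; ring
    have h2 : (n : ℤ) ∣ s * (m * k) - z * m :=
      (ZMod.intCast_zmod_eq_zero_iff_dvd _ n).1 hs'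
    obtain ⟨u, hu⟩ := hl
    rw [hu] at h2
    have hm' : (m : ℤ) ≠ 0 := by exact_mod_cast hm
    have h3 : (m : ℤ) * ((k * u : ℤ)) ∣ (m : ℤ) * (s * k - z) := by
      convert h2 using 1 <;> push_cast <;> ring
    have h4 : (k : ℤ) ∣ s * k - z :=
      dvd_trans (Dvd.intro u rfl) ((mul_dvd_mul_iff_left hm').1 h3)
    have h5 : (k : ℤ) ∣ s * k := Dvd.intro_left s rfl
    have := dvd_sub h5 h4
    simpa using this
  · rintro ⟨s, rfl⟩
    refine ⟨s, ?_⟩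
    simp only [zsmul_eq_mul]
    push_cast; ring

lemma mul_eq_zero_iff_mem_zmultiples (n m k : ℕ) (hn : n ≠ 0) (hmk : m * k = n)
    (x : ZMod n) :
    ((k : ZMod n)) * x = 0 ↔ x ∈ zmultiples ((m : ZMod n)) := by
  haveI : NeZero n := ⟨hn⟩
  have hk : k ≠ 0 := by rintro rfl; rw [mul_zero] at hmk; exact hn hmk.symm
  constructor
  · intro h
    have hx : ((x.val : ℕ) : ZMod n) = x := ZMod.natCast_rightInverse x
    have h' : ((k * x.val : ℕ) : ZMod n) = 0 := by push_cast; rw [hx]; exact h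
    have hdvd : n ∣ k * x.val := (ZMod.natCast_eq_zero_iff _ n).1 h'
    have hdvd' : k * m ∣ k * x.val := by rw [Nat.mul_comm k m, hmk]; exact hdvd
    have hm' : m ∣ x.val := (Nat.mul_dvd_mul_iff_left (Nat.pos_of_ne_zero hk)).1 hdvd'
    refine mem_zmultiples_iff.2 ⟨((x.val / m : ℕ) : ℤ), ?_⟩
    simp only [zsmul_eq_mul]
    rw [Int.cast_natCast, ← Nat.cast_mul, Nat.div_mul_cancel hm', hx]
  · rintro ⟨z, rfl⟩
    simp only [zsmul_eq_mul]
    have hz : ((m : ZMod n)) * (k : ZMod n) = 0 := by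
      rw [← Nat.cast_mul, hmk, ZMod.natCast_self]
    linear_combination (z : ZMod n) * hz

noncomputable def quotProd {A B : Type*} [AddCommGroup A] [AddCommGroup B]
    (N : AddSubgroup A) (N' : AddSubgroup B) :
    ((A × B) ⧸ N.prod N') ≃+ (A ⧸ N) × (B ⧸ N') := by
  have hker : ((QuotientAddGroup.mk' N).prodMap (QuotientAddGroup.mk' N')).ker = N.prod N' := by
    ext ⟨a, b⟩
    simp [AddMonoidHom.mem_ker, AddMonoidHom.prodMap, Prod.ext_iff,
      AddSubgroup.mem_prod, QuotientAddGroup.eq_zero_iff]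
  exact (QuotientAddGroup.quotientAddEquivOfEq hker.symm).trans
    (QuotientAddGroup.quotientKerEquivOfSurjective _
      ((QuotientAddGroup.mk'_surjective N).prodMap (QuotientAddGroup.mk'_surjective N')))

def swap23 (α β γ δ : Type*) [AddCommGroup α] [AddCommGroup β] [AddCommGroup γ] [AddCommGroup δ] :
    (α × β × γ × δ) ≃+ (α × γ × β × δ) where
  toFun x := (x.1, x.2.2.1, x.2.1, x.2.2.2)
  invFun x := (x.1, x.2.2.1, x.2.1, x.2.2.2)
  left_inv _ := rfl
  right_inv _ := rfl
  map_add' _ _ := rfl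

def quadHom (n : ℕ) (a b c d : ZMod n) :
    (ℤ × ℤ × ℤ × ℤ) →+
      ((zmultiples a).prod ((zmultiples b).prod ((zmultiples c).prod (zmultiples d)))) where
  toFun z := ⟨(z.1 • a, z.2.1 • b, z.2.2.1 • c, z.2.2.2 • d),
    AddSubgroup.mem_prod.2 ⟨mem_zmultiples_iff.2 ⟨z.1, rfl⟩,
      AddSubgroup.mem_prod.2 ⟨mem_zmultiples_iff.2 ⟨z.2.1, rfl⟩,
        AddSubgroup.mem_prod.2 ⟨mem_zmultiples_iff.2 ⟨z.2.2.1, rfl⟩,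
          mem_zmultiples_iff.2 ⟨z.2.2.2, rfl⟩⟩⟩⟩⟩
  map_zero' := Subtype.ext (by simp [Prod.ext_iff])
  map_add' x y := Subtype.ext (by simp [Prod.ext_iff, add_smul])

lemma quadHom_surjective (n : ℕ) (a b c d : ZMod n) :
    Function.Surjective (quadHom n a b c d) := by
  rintro ⟨⟨x1, x2, x3, x4⟩, hx⟩
  simp only [AddSubgroup.mem_prod, mem_zmultiples_iff, zsmul_eq_mul] at hx
  obtain ⟨⟨z1, h1⟩, ⟨z2, h2⟩, ⟨z3, h3⟩, ⟨z4, h4⟩⟩ := hx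
  exact ⟨(z1, z2, z3, z4), Subtype.ext (by simp [quadHom, zsmul_eq_mul, h1, h2, h3, h4])⟩

open AddSubgroup in
/-- if `4 ∣ d₂`, there exists an isotropic subgroup `G` of `(ZMod (d₁d₂))⁴`
of cardinality `d₁d₂` with `G^⊥/G ≅ (ZMod d₁)² × (ZMod d₂)²` containing the three
Weierstrass 2-torsion elements `e₁`, `f₁` and `e₁+f₁`. -/
theorem stmt_8 (d₁ d₂ : ℕ) (hd₁ : 0 < d₁) (hd₂ : 0 < d₂) (hdvd : d₁ ∣ d₂)
    (h4 : d₂ % 4 = 0) :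
    ∃ G : AddSubgroup (M (d₁ * d₂)),
      IsIsotropic (d₁ * d₂) G ∧
      Nat.card G = d₁ * d₂ ∧
      Nonempty
        ((perp (d₁ * d₂) G ⧸ G.addSubgroupOf (perp (d₁ * d₂) G)) ≃+
          (ZMod d₁ × ZMod d₁ × ZMod d₂ × ZMod d₂)) ∧
      ((d₁ * d₂) / 2) • e₁' (d₁ * d₂) ∈ G ∧
      ((d₁ * d₂) / 2) • f₁' (d₁ * d₂) ∈ G ∧
      ((d₁ * d₂) / 2) • e₁' (d₁ * d₂) + ((d₁ * d₂) / 2) • f₁' (d₁ * d₂) ∈ G := by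
  obtain ⟨t, ht⟩ : ∃ t, d₂ = 4 * t := ⟨d₂ / 4, by omega⟩
  have ht0 : 0 < t := by omega
  set n := d₁ * d₂ with hn
  have hn0 : n ≠ 0 := Nat.mul_ne_zero hd₁.ne' hd₂.ne'
  have hhalfeq : n = 2 * t * d₁ * 2 := by rw [hn, ht]; ring
  have hhalf : n / 2 = 2 * t * d₁ := by rw [hhalfeq]; exact Nat.mul_div_cancel _ (by norm_num)
  -- the subgroups
  set G : AddSubgroup (M n) :=
    (zmultiples ((2 * t * d₁ : ℕ) : ZMod n)).prod
      ((zmultiples ((d₂ : ℕ) : ZMod n)).prod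
        ((zmultiples ((2 * d₁ : ℕ) : ZMod n)).prod (zmultiples ((n : ℕ) : ZMod n)))) with hG
  set P : AddSubgroup (M n) :=
    (zmultiples ((2 * t : ℕ) : ZMod n)).prod
      ((zmultiples ((1 : ℕ) : ZMod n)).prod
        ((zmultiples ((2 : ℕ) : ZMod n)).prod (zmultiples ((d₁ : ℕ) : ZMod n)))) with hP
  -- P pairs to zero against G
  have hPG : ∀ x ∈ P, ∀ g ∈ G, sympForm n x g = 0 := by
    intro x hx g hg
    rw [hP] at hx; rw [hG] at hg
    simp only [AddSubgroup.mem_prod, mem_zmultiples_iff, zsmul_eq_mul] at hx hg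
    obtain ⟨⟨z1, hz1⟩, ⟨z2, hz2⟩, ⟨z3, hz3⟩, ⟨z4, hz4⟩⟩ := hx
    obtain ⟨⟨w1, hw1⟩, ⟨w2, hw2⟩, ⟨w3, hw3⟩, ⟨w4, hw4⟩⟩ := hg
    simp only [sympForm, ← hz1, ← hz2, ← hz3, ← hz4, ← hw1, ← hw2, ← hw3, ← hw4]
    have k1 : ((2 * t : ℕ) : ZMod n) * ((2 * d₁ : ℕ) : ZMod n) = 0 := by
      rw [← Nat.cast_mul, show (2 * t) * (2 * d₁) = n from by rw [hn, ht]; ring, ZMod.natCast_self]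
    have k2 : ((1 : ℕ) : ZMod n) * ((n : ℕ) : ZMod n) = 0 := by
      simp [ZMod.natCast_self]
    have k3 : ((2 : ℕ) : ZMod n) * ((2 * t * d₁ : ℕ) : ZMod n) = 0 := by
      rw [← Nat.cast_mul, show 2 * (2 * t * d₁) = n from by rw [hn, ht]; ring, ZMod.natCast_self]
    have k4 : ((d₁ : ℕ) : ZMod n) * ((d₂ : ℕ) : ZMod n) = 0 := by
      rw [← Nat.cast_mul, ← hn, ZMod.natCast_self]
    linear_combination ((z1 : ZMod n) * (w3 : ZMod n)) * k1 + ((z2 : ZMod n) * (w4 : ZMod n)) * k2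
      - ((z3 : ZMod n) * (w1 : ZMod n)) * k3 - ((z4 : ZMod n) * (w2 : ZMod n)) * k4
  -- G ≤ P
  have hGP : G ≤ P := by
    rw [hG, hP]
    refine AddSubgroup.prod_mono ?_ (AddSubgroup.prod_mono ?_ (AddSubgroup.prod_mono ?_ ?_))
    · exact zmultiples_le.2 (mem_zmultiples_iff.2 ⟨(d₁ : ℤ), by simp only [zsmul_eq_mul]; push_cast; ring⟩)
    · exact zmultiples_le.2 (mem_zmultiples_iff.2 ⟨(d₂ : ℤ), by simp only [zsmul_eq_mul]; push_cast; ring⟩)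
    · exact zmultiples_le.2 (mem_zmultiples_iff.2 ⟨(d₁ : ℤ), by simp only [zsmul_eq_mul]; push_cast; ring⟩)
    · exact zmultiples_le.2 (mem_zmultiples_iff.2 ⟨(d₂ : ℤ), by simp only [zsmul_eq_mul]; rw [hn]; push_cast; ring⟩)
  -- perp G = P
  have hperp : perp n G = P := by
    refine le_antisymm ?_ (fun x hx g hg => hPG x hx g hg)
    intro x hx
    have test1 : (((2 * t * d₁ : ℕ) : ZMod n), (0 : ZMod n), (0 : ZMod n), (0 : ZMod n)) ∈ G := by
      rw [hG]
      exact AddSubgroup.mem_prod.2 ⟨mem_zmultiples _, AddSubgroup.mem_prod.2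
        ⟨zero_mem _, AddSubgroup.mem_prod.2 ⟨zero_mem _, zero_mem _⟩⟩⟩
    have test2 : ((0 : ZMod n), ((d₂ : ℕ) : ZMod n), (0 : ZMod n), (0 : ZMod n)) ∈ G := by
      rw [hG]
      exact AddSubgroup.mem_prod.2 ⟨zero_mem _, AddSubgroup.mem_prod.2
        ⟨mem_zmultiples _, AddSubgroup.mem_prod.2 ⟨zero_mem _, zero_mem _⟩⟩⟩
    have test3 : ((0 : ZMod n), (0 : ZMod n), ((2 * d₁ : ℕ) : ZMod n), (0 : ZMod n)) ∈ G := by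
      rw [hG]
      exact AddSubgroup.mem_prod.2 ⟨zero_mem _, AddSubgroup.mem_prod.2
        ⟨zero_mem _, AddSubgroup.mem_prod.2 ⟨mem_zmultiples _, zero_mem _⟩⟩⟩
    have c1 := hx _ test3
    have c3 := hx _ test1
    have c4 := hx _ test2
    simp only [sympForm, mul_zero, zero_mul, add_zero, zero_add, sub_zero, zero_sub, neg_eq_zero,
      mul_eq_zero] at c1 c3 c4
    rw [hP]
    refine AddSubgroup.mem_prod.2 ⟨?_, AddSubgroup.mem_prod.2 ⟨?_, AddSubgroup.mem_prod.2 ⟨?_, ?_⟩⟩⟩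
    · exact (mul_eq_zero_iff_mem_zmultiples n (2 * t) (2 * d₁) hn0
        (by rw [hn, ht]; ring) x.1).1 (by linear_combination c1)
    · haveI : NeZero n := ⟨hn0⟩
      refine mem_zmultiples_iff.2 ⟨(x.2.1.val : ℤ), ?_⟩
      simp only [zsmul_eq_mul, Int.cast_natCast, Nat.cast_one, mul_one]
      exact ZMod.natCast_rightInverse x.2.1
    · exact (mul_eq_zero_iff_mem_zmultiples n 2 (2 * t * d₁) hn0
        (by rw [hn, ht]; ring) x.2.2.1).1 (by linear_combination c3)
    · exact (mul_eq_zero_iff_mem_zmultiples n d₁ d₂ hn0 hn.symm x.2.2.2).1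
        (by linear_combination c4)
  have he : (n / 2) • e₁' n ∈ G := by
    have h1 : (n / 2) • e₁' n = (((n / 2 : ℕ) : ZMod n), (0 : ZMod n), (0 : ZMod n), (0 : ZMod n)) := by
      simp [e₁', Prod.smul_def, nsmul_eq_mul]
    rw [h1, hhalf, hG]
    exact AddSubgroup.mem_prod.2 ⟨mem_zmultiples _, AddSubgroup.mem_prod.2
      ⟨zero_mem _, AddSubgroup.mem_prod.2 ⟨zero_mem _, zero_mem _⟩⟩⟩
  have hf : (n / 2) • f₁' n ∈ G := by
    have h1 : (n / 2) • f₁' n = ((0 : ZMod n), (0 : ZMod n), ((n / 2 : ℕ) : ZMod n), (0 : ZMod n)) := by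
      simp [f₁', Prod.smul_def, nsmul_eq_mul]
    rw [h1, hhalf, hG]
    refine AddSubgroup.mem_prod.2 ⟨zero_mem _, AddSubgroup.mem_prod.2
      ⟨zero_mem _, AddSubgroup.mem_prod.2 ⟨?_, zero_mem _⟩⟩⟩
    exact mem_zmultiples_iff.2 ⟨(t : ℤ), by simp only [zsmul_eq_mul]; push_cast; ring⟩
  refine ⟨G, fun g hg h hh => hPG g (hperp ▸ hGP hg) h hh, ?_, ?_, he, hf, G.add_mem he hf⟩
  · -- cardinality
    have cardsub : ∀ {α β : Type} [AddCommGroup α] [AddCommGroup β]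
        (A : AddSubgroup α) (B : AddSubgroup β),
        Nat.card (A.prod B) = Nat.card A * Nat.card B := by
      intro α β _ _ A B
      rw [Nat.card_congr (AddSubgroup.prodEquiv A B).toEquiv, Nat.card_prod]
    have cardz : ∀ m : ℕ, m ∣ n → Nat.card (zmultiples ((m : ℕ) : ZMod n)) = n / m := by
      intro m hm
      rw [Nat.card_zmultiples, ZMod.addOrderOf_coe m hn0, Nat.gcd_eq_right hm]
    rw [hG, cardsub, cardsub, cardsub,
      cardz _ ⟨2, by rw [hn, ht]; ring⟩, cardz _ ⟨d₁, by rw [hn]; ring⟩,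
      cardz _ ⟨2 * t, by rw [hn, ht]; ring⟩, cardz _ dvd_rfl]
    rw [show n / (2 * t * d₁) = 2 from by rw [hhalfeq]; exact Nat.mul_div_cancel_left _ (by positivity),
      show n / d₂ = d₁ from by rw [hn, Nat.mul_div_cancel _ hd₂],
      show n / (2 * d₁) = 2 * t from by
        rw [show n = 2 * d₁ * (2 * t) from by rw [hn, ht]; ring];
        exact Nat.mul_div_cancel_left _ (by positivity),
      Nat.div_self (Nat.pos_of_ne_zero hn0), hn, ht]
    ring
  · -- the quotient isomorphism
    rw [hperp]
    refine ⟨?_⟩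
    set N := G.addSubgroupOf P with hN
    have hPdef : P = (zmultiples ((2 * t : ℕ) : ZMod n)).prod
      ((zmultiples ((1 : ℕ) : ZMod n)).prod
        ((zmultiples ((2 : ℕ) : ZMod n)).prod (zmultiples ((d₁ : ℕ) : ZMod n)))) := hP
    let Φ := quadHom n ((2 * t : ℕ) : ZMod n) ((1 : ℕ) : ZMod n) ((2 : ℕ) : ZMod n)
      ((d₁ : ℕ) : ZMod n)
    let ψ := (QuotientAddGroup.mk' N).comp Φ
    have hψ : Function.Surjective ψ :=
      (QuotientAddGroup.mk'_surjective N).comp (quadHom_surjective n _ _ _ _)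
    have hker : ψ.ker = (zmultiples (d₁ : ℤ)).prod
        ((zmultiples (d₂ : ℤ)).prod ((zmultiples (d₁ : ℤ)).prod (zmultiples (d₂ : ℤ)))) := by
      ext z
      simp only [ψ, Φ, AddMonoidHom.mem_ker, AddMonoidHom.comp_apply, QuotientAddGroup.mk'_apply,
        QuotientAddGroup.eq_zero_iff, hN, AddSubgroup.mem_addSubgroupOf, quadHom,
        AddMonoidHom.coe_mk, ZeroHom.coe_mk, hG, AddSubgroup.mem_prod, Int.mem_zmultiples_iff]
      rw [smul_mem_zmultiples_iff n (2 * t) d₁ (2 * t * d₁) hn0 (by positivity) rfl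
          ⟨2, by rw [hn, ht]; ring⟩,
        smul_mem_zmultiples_iff n 1 d₂ d₂ hn0 one_ne_zero (one_mul d₂) ⟨d₁, by rw [hn]; ring⟩,
        smul_mem_zmultiples_iff n 2 d₁ (2 * d₁) hn0 two_ne_zero rfl ⟨2 * t, by rw [hn, ht]; ring⟩,
        smul_mem_zmultiples_iff n d₁ d₂ n hn0 hd₁.ne' hn.symm dvd_rfl]
    exact (QuotientAddGroup.quotientKerEquivOfSurjective ψ hψ).symm.trans
      ((QuotientAddGroup.quotientAddEquivOfEq hker).trans
        (((quotProd _ _).trans (AddEquiv.prodCongr (Int.quotientZMultiplesNatEquivZMod d₁)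
          ((quotProd _ _).trans (AddEquiv.prodCongr (Int.quotientZMultiplesNatEquivZMod d₂)
            ((quotProd _ _).trans (AddEquiv.prodCongr (Int.quotientZMultiplesNatEquivZMod d₁)
              (Int.quotientZMultiplesNatEquivZMod d₂))))))).trans
          (swap23 (ZMod d₁) (ZMod d₂) (ZMod d₁) (ZMod d₂))))
end

section
/- Let d₁, d₂ be positive integers with d₁ ∣ d₂, and set n := d₁·d₂. Let G be an isotropic subgroup of M = (ZMod n)⁴ (with respect to the standard symplectic form ω) such that G has cardinality n and the quotient G^⊥/G is isomorphic as an abelian group to ZMod d₁ × ZMod d₁ × ZMod d₂ × ZMod d₂. Then the order of every element of G divides d₂, i.e. d₂•g = 0 for all g ∈ G. -/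
lemma aux_dvd (d₁ d₂ : ℕ) (hd₁ : 0 < d₁) (hd₂ : 0 < d₂) (c : ZMod (d₁ * d₂))
    (hc : d₁ • c = 0) : d₂ ∣ c.val := by
  haveI : NeZero (d₁ * d₂) := ⟨by positivity⟩
  haveI : NeZero d₁ := ⟨by omega⟩
  haveI : NeZero d₂ := ⟨by omega⟩
  have h1 : ((d₁ * c.val : ℕ) : ZMod (d₁ * d₂)) = 0 := by
    push_cast
    rw [ZMod.natCast_val, ZMod.cast_id]
    rw [← nsmul_eq_mul]
    exact hc
  have h2 : d₁ * d₂ ∣ d₁ * c.val := (ZMod.natCast_eq_zero_iff _ _).mp h1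
  exact (mul_dvd_mul_iff_left (by omega : d₁ ≠ 0)).mp h2

lemma aux_inj (d₁ d₂ : ℕ) (hd₁ : 0 < d₁) (hd₂ : 0 < d₂) (c c' : ZMod (d₁ * d₂))
    (hc : d₁ • c = 0) (hc' : d₁ • c' = 0)
    (h : ((c.val / d₂ : ℕ) : ZMod d₁) = ((c'.val / d₂ : ℕ) : ZMod d₁)) : c = c' := by
  haveI : NeZero (d₁ * d₂) := ⟨by positivity⟩
  haveI : NeZero d₁ := ⟨by omega⟩
  haveI : NeZero d₂ := ⟨by omega⟩
  have hlt : c.val / d₂ < d₁ := by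
    have := ZMod.val_lt c
    exact Nat.div_lt_of_lt_mul (by rw [mul_comm d₂ d₁]; omega)
  have hlt' : c'.val / d₂ < d₁ := by
    have := ZMod.val_lt c'
    exact Nat.div_lt_of_lt_mul (by rw [mul_comm d₂ d₁]; omega)
  have h2 : c.val / d₂ = c'.val / d₂ := by
    have := congrArg ZMod.val h
    rwa [ZMod.val_cast_of_lt hlt, ZMod.val_cast_of_lt hlt'] at this
  have h3 : c.val = c'.val := by
    have e1 := Nat.div_mul_cancel (aux_dvd d₁ d₂ hd₁ hd₂ c hc)
    have e2 := Nat.div_mul_cancel (aux_dvd d₁ d₂ hd₁ hd₂ c' hc')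
    rw [← e1, ← e2, h2]
  exact ZMod.val_injective _ h3

/-- if `G` is an isotropic subgroup of `(ZMod (d₁d₂))⁴` of cardinality
`d₁d₂` with `G^⊥/G ≅ (ZMod d₁)² × (ZMod d₂)²`, then the order of every element of `G`
divides `d₂`. -/
theorem stmt_10 (d₁ d₂ : ℕ) (hd₁ : 0 < d₁) (hd₂ : 0 < d₂) (hdvd : d₁ ∣ d₂)
    (G : AddSubgroup (M (d₁ * d₂)))
    (hiso : IsIsotropic (d₁ * d₂) G)
    (hcard : Nat.card G = d₁ * d₂)
    (hquot : Nonempty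
      ((perp (d₁ * d₂) G ⧸ G.addSubgroupOf (perp (d₁ * d₂) G)) ≃+
        (ZMod d₁ × ZMod d₁ × ZMod d₂ × ZMod d₂))) :
    ∀ g ∈ G, d₂ • g = 0 := by
  haveI : NeZero (d₁ * d₂) := ⟨by positivity⟩
  haveI : NeZero d₁ := ⟨by omega⟩
  haveI : NeZero d₂ := ⟨by omega⟩
  obtain ⟨e⟩ := hquot
  set P := perp (d₁ * d₂) G with hPdef
  -- the multiplication-by-d₁ homomorphism on P
  let f : P →+ P := AddMonoidHom.mk' (fun x => d₁ • x) (fun a b => smul_add d₁ a b)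
  -- the cast homomorphism ZMod d₂ →+ ZMod d₁
  let cst : ZMod d₂ →+ ZMod d₁ := (ZMod.castHom hdvd (ZMod d₁)).toAddMonoidHom
  have cst_surj : Function.Surjective cst := by
    intro b
    refine ⟨(b.val : ZMod d₂), ?_⟩
    simp [cst, ZMod.natCast_val, ZMod.cast_id]
  let r : (ZMod d₁ × ZMod d₁ × ZMod d₂ × ZMod d₂) →+ (ZMod d₁ × ZMod d₁ × ZMod d₁ × ZMod d₁) :=
    (AddMonoidHom.id _).prodMap ((AddMonoidHom.id _).prodMap (cst.prodMap cst))
  have r_surj : Function.Surjective r :=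
    Function.Surjective.prodMap Function.surjective_id
      (Function.Surjective.prodMap Function.surjective_id
        (Function.Surjective.prodMap cst_surj cst_surj))
  let φ : P →+ (ZMod d₁ × ZMod d₁ × ZMod d₁ × ZMod d₁) :=
    r.comp (e.toAddMonoidHom.comp (QuotientAddGroup.mk' (G.addSubgroupOf P)))
  have φ_surj : Function.Surjective φ :=
    r_surj.comp (e.surjective.comp (QuotientAddGroup.mk'_surjective _))
  have hV : Nat.card (ZMod d₁ × ZMod d₁ × ZMod d₁ × ZMod d₁) = d₁ ^ 4 := by
    simp only [Nat.card_prod, Nat.card_zmod]; ring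
  have h0 : ∀ a : ZMod d₁, d₁ • a = 0 := fun a => by
    rw [nsmul_eq_mul, ZMod.natCast_self, zero_mul]
  have hkill : ∀ v : (ZMod d₁ × ZMod d₁ × ZMod d₁ × ZMod d₁), d₁ • v = 0 := by
    intro ⟨a, b, c, d⟩
    show (d₁ • a, d₁ • b, d₁ • c, d₁ • d) = (0, 0, 0, 0)
    rw [h0, h0, h0, h0]
  have hle : f.range ≤ φ.ker := by
    rintro y ⟨x, rfl⟩
    have hfx : f x = d₁ • x := rfl
    rw [AddMonoidHom.mem_ker, hfx, map_nsmul, hkill]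
  -- compare the two quotients of P
  let qmap : (P ⧸ f.range) →+ (P ⧸ φ.ker) :=
    QuotientAddGroup.map _ _ (AddMonoidHom.id P) hle
  have qmap_surj : Function.Surjective qmap := by
    intro y
    obtain ⟨x, rfl⟩ := QuotientAddGroup.mk'_surjective φ.ker y
    exact ⟨QuotientAddGroup.mk' _ x, rfl⟩
  have c1 : Nat.card (P ⧸ φ.ker) = d₁ ^ 4 := by
    rw [← hV]
    exact Nat.card_congr (QuotientAddGroup.quotientKerEquivOfSurjective φ φ_surj).toEquiv
  have c2 : Nat.card (P ⧸ φ.ker) ≤ Nat.card (P ⧸ f.range) :=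
    Nat.card_le_card_of_surjective qmap qmap_surj
  have c3 : Nat.card (P ⧸ f.ker) = Nat.card f.range :=
    Nat.card_congr (QuotientAddGroup.quotientKerEquivRange f).toEquiv
  have c4 : Nat.card P = Nat.card (P ⧸ f.range) * Nat.card f.range :=
    AddSubgroup.card_eq_card_quotient_mul_card_addSubgroup _
  have c5 : Nat.card P = Nat.card (P ⧸ f.ker) * Nat.card f.ker :=
    AddSubgroup.card_eq_card_quotient_mul_card_addSubgroup _
  have hrangepos : 0 < Nat.card f.range := Nat.card_pos
  have heq : Nat.card (P ⧸ f.range) = Nat.card f.ker := by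
    have hmul : Nat.card (P ⧸ f.range) * Nat.card f.range
        = Nat.card f.ker * Nat.card f.range := by
      rw [← c4, c5, c3]; ring
    exact Nat.eq_of_mul_eq_mul_right hrangepos hmul
  have hker_ge : d₁ ^ 4 ≤ Nat.card f.ker := by
    calc d₁ ^ 4 = Nat.card (P ⧸ φ.ker) := c1.symm
      _ ≤ Nat.card (P ⧸ f.range) := c2
      _ = Nat.card f.ker := heq
  -- the d₁-torsion subset of M
  set T : Set (M (d₁ * d₂)) := {x | d₁ • x = 0} with hTdef
  have hT_comp : ∀ x ∈ T, d₁ • (x : M (d₁ * d₂)).1 = 0 ∧ d₁ • x.2.1 = 0 ∧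
      d₁ • x.2.2.1 = 0 ∧ d₁ • x.2.2.2 = 0 := by
    intro x hx
    have : (d₁ • x.1, d₁ • x.2.1, d₁ • x.2.2.1, d₁ • x.2.2.2) = ((0 : ZMod (d₁*d₂)), (0 : ZMod (d₁*d₂)), (0 : ZMod (d₁*d₂)), (0 : ZMod (d₁*d₂))) := hx
    simpa [Prod.ext_iff] using this
  have hT_le : Nat.card T ≤ d₁ ^ 4 := by
    rw [← hV]
    refine Nat.card_le_card_of_injective
      (fun x => ((((x : M (d₁*d₂)).1.val / d₂ : ℕ) : ZMod d₁),
        (((x : M (d₁*d₂)).2.1.val / d₂ : ℕ) : ZMod d₁),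
        (((x : M (d₁*d₂)).2.2.1.val / d₂ : ℕ) : ZMod d₁),
        (((x : M (d₁*d₂)).2.2.2.val / d₂ : ℕ) : ZMod d₁))) ?_
    rintro ⟨x, hx⟩ ⟨y, hy⟩ hxy
    obtain ⟨hx1, hx2, hx3, hx4⟩ := hT_comp x hx
    obtain ⟨hy1, hy2, hy3, hy4⟩ := hT_comp y hy
    simp only [Prod.ext_iff] at hxy
    obtain ⟨e1, e2, e3, e4⟩ := hxy
    apply Subtype.ext
    exact Prod.ext (aux_inj d₁ d₂ hd₁ hd₂ _ _ hx1 hy1 e1)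
      (Prod.ext (aux_inj d₁ d₂ hd₁ hd₂ _ _ hx2 hy2 e2)
        (Prod.ext (aux_inj d₁ d₂ hd₁ hd₂ _ _ hx3 hy3 e3)
          (aux_inj d₁ d₂ hd₁ hd₂ _ _ hx4 hy4 e4)))
  -- every d₁-torsion element of M lies in P
  have key : ∀ x : M (d₁ * d₂), d₁ • x = 0 → x ∈ P := by
    intro x hx
    let ι : f.ker → T := fun y =>
      ⟨((y : P) : M (d₁ * d₂)), by
        have hy : f (y : P) = 0 := y.2
        have hy' : d₁ • ((y : P) : P) = 0 := hy
        have := congrArg Subtype.val hy'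
        rwa [AddSubgroupClass.coe_nsmul] at this⟩
    have ι_inj : Function.Injective ι := by
      rintro a b hab
      have h1 := congrArg Subtype.val hab
      exact Subtype.ext (Subtype.ext h1)
    have hcards : Nat.card f.ker = Nat.card T :=
      le_antisymm (Nat.card_le_card_of_injective ι ι_inj)
        (le_trans hT_le hker_ge)
    have ι_bij : Function.Bijective ι :=
      (Nat.bijective_iff_injective_and_card ι).mpr ⟨ι_inj, hcards⟩
    obtain ⟨y, hy⟩ := ι_bij.2 ⟨x, hx⟩
    have : ((y : P) : M (d₁ * d₂)) = x := congrArg Subtype.val hy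
    rw [← this]
    exact (y : P).2
  -- apply to d₂ • (basis vectors)
  have hzero : ∀ x : M (d₁ * d₂), d₁ • (d₂ • x) = 0 := by
    intro x
    rw [← mul_nsmul]
    have hz : ∀ a : ZMod (d₁ * d₂), (d₂ * d₁) • a = 0 := fun a => by
      have hcast : ((d₂ * d₁ : ℕ) : ZMod (d₁ * d₂)) = 0 := by
        rw [mul_comm]; exact ZMod.natCast_self _
      rw [nsmul_eq_mul, hcast, zero_mul]
    show ((d₂ * d₁) • x.1, (d₂ * d₁) • x.2.1, (d₂ * d₁) • x.2.2.1, (d₂ * d₁) • x.2.2.2)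
      = ((0 : ZMod (d₁*d₂)), (0 : ZMod (d₁*d₂)), (0 : ZMod (d₁*d₂)), (0 : ZMod (d₁*d₂)))
    rw [hz, hz, hz, hz]
  intro g hg
  have k1 := key (d₂ • e₁' (d₁ * d₂)) (hzero _) g hg
  have k2 := key (d₂ • e₂' (d₁ * d₂)) (hzero _) g hg
  have k3 := key (d₂ • f₁' (d₁ * d₂)) (hzero _) g hg
  have k4 := key (d₂ • f₂' (d₁ * d₂)) (hzero _) g hg
  have hsm : ∀ a : ZMod (d₁ * d₂), d₂ • a = (d₂ : ZMod (d₁ * d₂)) * a := fun a => by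
    rw [nsmul_eq_mul]
  simp only [sympForm, e₁', e₂', f₁', f₂'] at k1 k2 k3 k4
  have hc1 : (d₂ : ZMod (d₁ * d₂)) * g.2.2.1 = 0 := by
    have : (d₂ • (1 : ZMod (d₁*d₂))) * g.2.2.1 + (d₂ • (0 : ZMod (d₁*d₂))) * g.2.2.2
        - (d₂ • (0 : ZMod (d₁*d₂))) * g.1 - (d₂ • (0 : ZMod (d₁*d₂))) * g.2.1 = 0 := k1
    simpa [hsm] using this
  have hc2 : (d₂ : ZMod (d₁ * d₂)) * g.2.2.2 = 0 := by
    have : (d₂ • (0 : ZMod (d₁*d₂))) * g.2.2.1 + (d₂ • (1 : ZMod (d₁*d₂))) * g.2.2.2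
        - (d₂ • (0 : ZMod (d₁*d₂))) * g.1 - (d₂ • (0 : ZMod (d₁*d₂))) * g.2.1 = 0 := k2
    simpa [hsm] using this
  have hc3 : (d₂ : ZMod (d₁ * d₂)) * g.1 = 0 := by
    have : (d₂ • (0 : ZMod (d₁*d₂))) * g.2.2.1 + (d₂ • (0 : ZMod (d₁*d₂))) * g.2.2.2
        - (d₂ • (1 : ZMod (d₁*d₂))) * g.1 - (d₂ • (0 : ZMod (d₁*d₂))) * g.2.1 = 0 := k3
    have h' := this
    simp [hsm] at h'
    simpa using neg_eq_zero.mp (by simpa [hsm] using this)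
  have hc4 : (d₂ : ZMod (d₁ * d₂)) * g.2.1 = 0 := by
    have : (d₂ • (0 : ZMod (d₁*d₂))) * g.2.2.1 + (d₂ • (0 : ZMod (d₁*d₂))) * g.2.2.2
        - (d₂ • (0 : ZMod (d₁*d₂))) * g.1 - (d₂ • (1 : ZMod (d₁*d₂))) * g.2.1 = 0 := k4
    simpa using neg_eq_zero.mp (by simpa [hsm] using this)
  show (d₂ • g.1, d₂ • g.2.1, d₂ • g.2.2.1, d₂ • g.2.2.2)
    = ((0 : ZMod (d₁*d₂)), (0 : ZMod (d₁*d₂)), (0 : ZMod (d₁*d₂)), (0 : ZMod (d₁*d₂)))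
  rw [hsm, hsm, hsm, hsm, hc1, hc2, hc3, hc4]
end

section
/- Let d₁, d₂ be positive integers with d₁ ∣ d₂ and d₂ even, and set n := d₁·d₂. Then there exists an isotropic subgroup G of M = (ZMod n)⁴ (with respect to the standard symplectic form ω) such that G has cardinality n, the quotient G^⊥/G is isomorphic as an abelian group to ZMod d₁ × ZMod d₁ × ZMod d₂ × ZMod d₂, and no three pairwise distinct elements among the six Weierstrass 2-torsion elements e₁, f₁, e₁+f₁, e₂, f₂, e₂+f₂ lie in a common coset of G (i.e. every G-coset contains at most two of these six elements). -/
lemma aux_cast_val (n : ℕ) [NeZero n] (x : ZMod n) : ((x.val : ℕ) : ZMod n) = x :=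
  ZMod.natCast_rightInverse x

lemma aux_mul_eq_zero_iff {a b n : ℕ} (hn : n = a * b) (ha : 0 < a) (hb : 0 < b) (x : ZMod n) :
    (a : ZMod n) * x = 0 ↔ b ∣ x.val := by
  subst hn
  haveI : NeZero (a * b) := ⟨Nat.mul_ne_zero ha.ne' hb.ne'⟩
  have h : (a : ZMod (a * b)) * x = ((a * x.val : ℕ) : ZMod (a * b)) := by
    rw [Nat.cast_mul, aux_cast_val]
  rw [h, ZMod.natCast_eq_zero_iff, Nat.mul_dvd_mul_iff_left ha]

lemma aux_exists {a b n : ℕ} (hn : n = a * b) (ha : 0 < a) (hb : 0 < b) (x : ZMod n)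
    (h : (a : ZMod n) * x = 0) : ∃ y : ZMod n, x = (b : ZMod n) * y := by
  obtain ⟨k, hk⟩ := (aux_mul_eq_zero_iff hn ha hb x).mp h
  haveI : NeZero n := ⟨by subst hn; exact Nat.mul_ne_zero ha.ne' hb.ne'⟩
  refine ⟨(k : ZMod n), ?_⟩
  rw [← Nat.cast_mul, ← hk, aux_cast_val]

lemma aux_cast_eq_zero_iff {b n : ℕ} [NeZero n] [NeZero b] (hdvd : b ∣ n) (x : ZMod n) :
    (ZMod.castHom hdvd (ZMod b)) x = 0 ↔ b ∣ x.val := by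
  conv_lhs => rw [← aux_cast_val n x]
  rw [map_natCast, ZMod.natCast_eq_zero_iff]

def Gdef (d₁ d₂ : ℕ) : AddSubgroup (M (d₁ * d₂)) where
  carrier := {x | (d₁ : ZMod (d₁ * d₂)) * x.1 = 0 ∧ (d₂ : ZMod (d₁ * d₂)) * x.2.1 = 0 ∧
    x.2.2.1 = 0 ∧ x.2.2.2 = 0}
  zero_mem' := by simp
  add_mem' := by
    rintro ⟨a1, a2, a3, a4⟩ ⟨b1, b2, b3, b4⟩ ⟨h1, h2, h3, h4⟩ ⟨k1, k2, k3, k4⟩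
    refine ⟨?_, ?_, ?_, ?_⟩ <;> simp_all [mul_add]
  neg_mem' := by
    rintro ⟨a1, a2, a3, a4⟩ ⟨h1, h2, h3, h4⟩
    refine ⟨?_, ?_, ?_, ?_⟩ <;> simp_all

lemma mem_Gdef {d₁ d₂ : ℕ} (x : M (d₁ * d₂)) :
    x ∈ Gdef d₁ d₂ ↔ (d₁ : ZMod (d₁ * d₂)) * x.1 = 0 ∧ (d₂ : ZMod (d₁ * d₂)) * x.2.1 = 0 ∧
      x.2.2.1 = 0 ∧ x.2.2.2 = 0 := Iff.rfl

noncomputable def torsionEquiv (a b n : ℕ) (hn : n = a * b) (ha : 0 < a) (hb : 0 < b) :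
    {x : ZMod n // (a : ZMod n) * x = 0} ≃ ZMod a := by
  haveI : NeZero n := ⟨by subst hn; exact Nat.mul_ne_zero ha.ne' hb.ne'⟩
  haveI : NeZero a := ⟨ha.ne'⟩
  exact {
    toFun := fun x => ((x.1.val / b : ℕ) : ZMod a)
    invFun := fun k => ⟨((b * k.val : ℕ) : ZMod n), by
      rw [← Nat.cast_mul, show a * (b * k.val) = n * k.val by rw [hn]; ring,
        Nat.cast_mul, ZMod.natCast_self, zero_mul]⟩
    left_inv := fun x => by
      obtain ⟨k, hk⟩ := (aux_mul_eq_zero_iff hn ha hb x.1).mp x.2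
      apply Subtype.ext
      have hval : x.1.val = b * (x.1.val / b) := (Nat.mul_div_cancel' ⟨k, hk⟩).symm
      have hlt : x.1.val / b < a := by
        apply Nat.div_lt_of_lt_mul
        rw [mul_comm b a, ← hn]
        exact ZMod.val_lt x.1
      simp only [ZMod.val_natCast_of_lt hlt, ← hval, aux_cast_val]
    right_inv := fun k => by
      have hlt : b * k.val < n := by
        rw [hn, mul_comm a b]
        exact (Nat.mul_lt_mul_left hb).mpr (ZMod.val_lt k)
      simp only [ZMod.val_natCast_of_lt hlt, Nat.mul_div_cancel_left _ hb, aux_cast_val] }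

noncomputable def GdefEquiv (d₁ d₂ : ℕ) (hd₁ : 0 < d₁) (hd₂ : 0 < d₂) :
    (Gdef d₁ d₂) ≃ ZMod d₁ × ZMod d₂ := by
  refine Equiv.trans ?_ (Equiv.prodCongr
    (torsionEquiv d₁ d₂ (d₁ * d₂) rfl hd₁ hd₂)
    (torsionEquiv d₂ d₁ (d₁ * d₂) (mul_comm d₁ d₂) hd₂ hd₁))
  exact {
    toFun := fun g => (⟨g.1.1, g.2.1⟩, ⟨g.1.2.1, g.2.2.1⟩)
    invFun := fun p => ⟨(p.1.1, p.2.1, 0, 0), ⟨p.1.2, p.2.2, rfl, rfl⟩⟩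
    left_inv := fun g => by
      apply Subtype.ext
      obtain ⟨⟨g1, g2, g3, g4⟩, h1, h2, h3, h4⟩ := g
      exact Prod.ext rfl (Prod.ext rfl (Prod.ext h3.symm h4.symm))
    right_inv := fun p => rfl }

lemma card_Gdef (d₁ d₂ : ℕ) (hd₁ : 0 < d₁) (hd₂ : 0 < d₂) :
    Nat.card (Gdef d₁ d₂) = d₁ * d₂ := by
  rw [Nat.card_congr (GdefEquiv d₁ d₂ hd₁ hd₂), Nat.card_prod, Nat.card_zmod, Nat.card_zmod]

def Theta (d₁ d₂ : ℕ) : M (d₁ * d₂) →+ perp (d₁ * d₂) (Gdef d₁ d₂) where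
  toFun v := ⟨(v.1, v.2.1, (d₁ : ZMod (d₁ * d₂)) * v.2.2.1, (d₂ : ZMod (d₁ * d₂)) * v.2.2.2), by
    rintro ⟨g1, g2, g3, g4⟩ ⟨h1, h2, h3, h4⟩
    simp only at h1 h2 h3 h4
    subst h3; subst h4
    simp only [sympForm]
    have e1 : v.2.2.1 * (↑d₁ * g1) = 0 := by rw [h1, mul_zero]
    have e2 : v.2.2.2 * (↑d₂ * g2) = 0 := by rw [h2, mul_zero]
    calc v.1 * 0 + v.2.1 * 0 - ↑d₁ * v.2.2.1 * g1 - ↑d₂ * v.2.2.2 * g2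
        = -(v.2.2.1 * (↑d₁ * g1)) - v.2.2.2 * (↑d₂ * g2) := by ring
      _ = 0 := by rw [e1, e2]; ring⟩
  map_zero' := by apply Subtype.ext; simp
  map_add' v w := by
    apply Subtype.ext
    simp only [AddSubgroup.coe_add, Prod.fst_add, Prod.snd_add, Prod.mk_add_mk, mul_add]

def Xi (d₁ d₂ : ℕ) : M (d₁ * d₂) →+ ZMod d₁ × ZMod d₁ × ZMod d₂ × ZMod d₂ where
  toFun x := (ZMod.castHom (dvd_mul_right d₁ d₂) (ZMod d₁) x.2.1,
              ZMod.castHom (dvd_mul_right d₁ d₂) (ZMod d₁) x.2.2.2,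
              ZMod.castHom (dvd_mul_left d₂ d₁) (ZMod d₂) x.1,
              ZMod.castHom (dvd_mul_left d₂ d₁) (ZMod d₂) x.2.2.1)
  map_zero' := by simp
  map_add' x y := by
    simp only [Prod.fst_add, Prod.snd_add, map_add, Prod.mk_add_mk]

lemma Xi_surjective (d₁ d₂ : ℕ) (hd₁ : 0 < d₁) (hd₂ : 0 < d₂) :
    Function.Surjective (Xi d₁ d₂) := by
  haveI : NeZero (d₁ * d₂) := ⟨Nat.mul_ne_zero hd₁.ne' hd₂.ne'⟩
  haveI : NeZero d₁ := ⟨hd₁.ne'⟩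
  haveI : NeZero d₂ := ⟨hd₂.ne'⟩
  rintro ⟨p, q, r, s⟩
  refine ⟨((r.val : ZMod (d₁ * d₂)), (p.val : ZMod (d₁ * d₂)),
    (s.val : ZMod (d₁ * d₂)), (q.val : ZMod (d₁ * d₂))), ?_⟩
  simp only [Xi, AddMonoidHom.coe_mk, ZeroHom.coe_mk, map_natCast, aux_cast_val]

lemma Theta_quot_surjective (d₁ d₂ : ℕ) (hd₁ : 0 < d₁) (hd₂ : 0 < d₂) :
    Function.Surjective
      ((QuotientAddGroup.mk' ((Gdef d₁ d₂).addSubgroupOf (perp (d₁ * d₂) (Gdef d₁ d₂)))).comp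
        (Theta d₁ d₂)) := by
  intro q
  obtain ⟨⟨⟨y1, y2, y3, y4⟩, hy⟩, rfl⟩ := QuotientAddGroup.mk'_surjective _ q
  have hg1 : ((d₂ : ZMod (d₁ * d₂)), 0, 0, 0) ∈ Gdef d₁ d₂ := by
    refine ⟨?_, by simp, rfl, rfl⟩
    simp only [← Nat.cast_mul, ZMod.natCast_self]
  have hg2 : ((0 : ZMod (d₁ * d₂)), (d₁ : ZMod (d₁ * d₂)), 0, 0) ∈ Gdef d₁ d₂ := by
    refine ⟨by simp, ?_, rfl, rfl⟩
    rw [← Nat.cast_mul, mul_comm d₂ d₁, ZMod.natCast_self]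
  have h3 : (d₂ : ZMod (d₁ * d₂)) * y3 = 0 := by
    have := hy _ hg1
    simp only [sympForm] at this
    have : y3 * (d₂ : ZMod (d₁ * d₂)) = 0 := by linear_combination -this
    linear_combination this
  have h4 : (d₁ : ZMod (d₁ * d₂)) * y4 = 0 := by
    have := hy _ hg2
    simp only [sympForm] at this
    linear_combination -this
  obtain ⟨c, hc⟩ := aux_exists (mul_comm d₁ d₂) hd₂ hd₁ y3 h3
  obtain ⟨d, hd⟩ := aux_exists rfl hd₁ hd₂ y4 h4
  refine ⟨(y1, y2, c, d), ?_⟩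
  simp only [AddMonoidHom.comp_apply, QuotientAddGroup.mk'_apply]
  congr 1
  apply Subtype.ext
  simp only [Theta, AddMonoidHom.coe_mk, ZeroHom.coe_mk, ← hc, ← hd]

lemma ker_eq (d₁ d₂ : ℕ) (hd₁ : 0 < d₁) (hd₂ : 0 < d₂) :
    ((QuotientAddGroup.mk' ((Gdef d₁ d₂).addSubgroupOf (perp (d₁ * d₂) (Gdef d₁ d₂)))).comp
        (Theta d₁ d₂)).ker = (Xi d₁ d₂).ker := by
  haveI : NeZero (d₁ * d₂) := ⟨Nat.mul_ne_zero hd₁.ne' hd₂.ne'⟩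
  haveI : NeZero d₁ := ⟨hd₁.ne'⟩
  haveI : NeZero d₂ := ⟨hd₂.ne'⟩
  ext x
  rw [AddMonoidHom.mem_ker, AddMonoidHom.mem_ker, AddMonoidHom.comp_apply,
    QuotientAddGroup.mk'_apply, QuotientAddGroup.eq_zero_iff, AddSubgroup.mem_addSubgroupOf]
  have hmem : ((Theta d₁ d₂ x : M (d₁ * d₂)) ∈ Gdef d₁ d₂) ↔
      ((d₁ : ZMod (d₁ * d₂)) * x.1 = 0 ∧ (d₂ : ZMod (d₁ * d₂)) * x.2.1 = 0 ∧
        (d₁ : ZMod (d₁ * d₂)) * x.2.2.1 = 0 ∧ (d₂ : ZMod (d₁ * d₂)) * x.2.2.2 = 0) := Iff.rfl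
  rw [hmem]
  have hXi : Xi d₁ d₂ x = 0 ↔
      (ZMod.castHom (dvd_mul_right d₁ d₂) (ZMod d₁) x.2.1 = 0 ∧
       ZMod.castHom (dvd_mul_right d₁ d₂) (ZMod d₁) x.2.2.2 = 0 ∧
       ZMod.castHom (dvd_mul_left d₂ d₁) (ZMod d₂) x.1 = 0 ∧
       ZMod.castHom (dvd_mul_left d₂ d₁) (ZMod d₂) x.2.2.1 = 0) := by
    simp only [Xi, AddMonoidHom.coe_mk, ZeroHom.coe_mk, Prod.mk_eq_zero]
  rw [hXi]
  rw [aux_mul_eq_zero_iff rfl hd₁ hd₂, aux_mul_eq_zero_iff rfl hd₁ hd₂,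
    aux_mul_eq_zero_iff (mul_comm d₁ d₂) hd₂ hd₁, aux_mul_eq_zero_iff (mul_comm d₁ d₂) hd₂ hd₁,
    aux_cast_eq_zero_iff, aux_cast_eq_zero_iff, aux_cast_eq_zero_iff, aux_cast_eq_zero_iff]
  tauto

lemma wset (n : ℕ) :
    weierstrassSet n = {(((n / 2 : ℕ) : ZMod n), 0, 0, 0), (0, 0, ((n / 2 : ℕ) : ZMod n), 0),
      (((n / 2 : ℕ) : ZMod n), 0, ((n / 2 : ℕ) : ZMod n), 0), (0, ((n / 2 : ℕ) : ZMod n), 0, 0),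
      (0, 0, 0, ((n / 2 : ℕ) : ZMod n)),
      (0, ((n / 2 : ℕ) : ZMod n), 0, ((n / 2 : ℕ) : ZMod n))} := by
  simp only [weierstrassSet, e₁', e₂', f₁', f₂', Prod.smul_mk, smul_zero, nsmul_eq_mul, mul_one,
    Prod.mk_add_mk, add_zero, zero_add]

set_option maxHeartbeats 2000000 in
lemma weier (d₁ d₂ : ℕ) (hd₁ : 0 < d₁) (hd₂ : 0 < d₂) (heven : 2 ∣ d₂) :
    ∀ x ∈ weierstrassSet (d₁ * d₂), ∀ y ∈ weierstrassSet (d₁ * d₂),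
      ∀ z ∈ weierstrassSet (d₁ * d₂),
        x ≠ y → x ≠ z → y ≠ z → ¬(x - y ∈ Gdef d₁ d₂ ∧ x - z ∈ Gdef d₁ d₂) := by
  haveI : NeZero (d₁ * d₂) := ⟨Nat.mul_ne_zero hd₁.ne' hd₂.ne'⟩
  have hn2 : 2 ∣ d₁ * d₂ := heven.mul_left d₁
  have hnpos : 0 < d₁ * d₂ := Nat.mul_pos hd₁ hd₂
  have hm : ((d₁ * d₂ / 2 : ℕ) : ZMod (d₁ * d₂)) ≠ 0 := by
    intro h
    rw [ZMod.natCast_eq_zero_iff] at h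
    have hdvd := h
    have h1 : 0 < d₁ * d₂ / 2 := Nat.div_pos (Nat.le_of_dvd hnpos hn2) two_pos
    have h2 : d₁ * d₂ / 2 < d₁ * d₂ := Nat.div_lt_self hnpos one_lt_two
    exact absurd (Nat.le_of_dvd h1 hdvd) (not_le.mpr h2)
  intro x hx y hy z hz hxy hxz hyz hh
  obtain ⟨h1, h2⟩ := hh
  have c1 : (x - y).2.2.1 = 0 := ((mem_Gdef _).mp h1).2.2.1
  have c2 : (x - y).2.2.2 = 0 := ((mem_Gdef _).mp h1).2.2.2
  have c3 : (x - z).2.2.1 = 0 := ((mem_Gdef _).mp h2).2.2.1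
  have c4 : (x - z).2.2.2 = 0 := ((mem_Gdef _).mp h2).2.2.2
  rw [Prod.snd_sub, Prod.snd_sub, Prod.fst_sub, sub_eq_zero] at c1 c3
  rw [Prod.snd_sub, Prod.snd_sub, Prod.snd_sub, sub_eq_zero] at c2 c4
  clear h1 h2 hn2 hnpos heven hd₁ hd₂
  rw [wset] at hx hy hz
  simp only [Set.mem_insert_iff, Set.mem_singleton_iff] at hx hy hz
  rcases hx with rfl | rfl | rfl | rfl | rfl | rfl <;>
    rcases hy with rfl | rfl | rfl | rfl | rfl | rfl <;>
      rcases hz with rfl | rfl | rfl | rfl | rfl | rfl <;>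
        simp_all

/-- for `d₂` even there exists an isotropic subgroup `G` of
`(ZMod (d₁d₂))⁴` of cardinality `d₁d₂` with `G^⊥/G ≅ (ZMod d₁)² × (ZMod d₂)²` such that no
three pairwise distinct Weierstrass 2-torsion elements lie in a common coset of `G`. -/
theorem stmt_11 (d₁ d₂ : ℕ) (hd₁ : 0 < d₁) (hd₂ : 0 < d₂) (hdvd : d₁ ∣ d₂)
    (heven : 2 ∣ d₂) :
    ∃ G : AddSubgroup (M (d₁ * d₂)),
      IsIsotropic (d₁ * d₂) G ∧
      Nat.card G = d₁ * d₂ ∧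
      Nonempty
        ((perp (d₁ * d₂) G ⧸ G.addSubgroupOf (perp (d₁ * d₂) G)) ≃+
          (ZMod d₁ × ZMod d₁ × ZMod d₂ × ZMod d₂)) ∧
      ∀ x ∈ weierstrassSet (d₁ * d₂), ∀ y ∈ weierstrassSet (d₁ * d₂),
        ∀ z ∈ weierstrassSet (d₁ * d₂),
          x ≠ y → x ≠ z → y ≠ z → ¬(x - y ∈ G ∧ x - z ∈ G) := by
  refine ⟨Gdef d₁ d₂, ?_, card_Gdef d₁ d₂ hd₁ hd₂, ?_, weier d₁ d₂ hd₁ hd₂ heven⟩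
  · intro g hg h hh
    obtain ⟨-, -, hg3, hg4⟩ := (mem_Gdef _).mp hg
    obtain ⟨-, -, hh3, hh4⟩ := (mem_Gdef _).mp hh
    simp [sympForm, hg3, hg4, hh3, hh4]
  · exact ⟨(QuotientAddGroup.quotientKerEquivOfSurjective _
        (Theta_quot_surjective d₁ d₂ hd₁ hd₂)).symm.trans
      ((QuotientAddGroup.quotientAddEquivOfEq (ker_eq d₁ d₂ hd₁ hd₂)).trans
        (QuotientAddGroup.quotientKerEquivOfSurjective _ (Xi_surjective d₁ d₂ hd₁ hd₂)))⟩
end
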